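/- arXiv:2006.09568 — 7 statements merged into one kernel-verified Lean document; each statement's English description precedes it below -/
import Mathlib

section
/- Let N ≥ 1 and let x_0, x_1, …, x_N ∈ ℝ² satisfy ‖x_i − x_0‖₂ ≤ 1 for all 0 ≤ i ≤ N. Let A = {x_0, x_1, …, x_N} and let A_{⊕1} = A ⊕ B, where B is the closed unit Euclidean disc. Then the upper surface area (perimeter) of A_{⊕1} satisfies λ̄(∂A_{⊕1}) ≤ 4π, i.e., it is at most the perimeter of the disc of radius 2 centered at x_0. -/
open MeasureTheory Set Filter
open scoped ENNReal Pointwise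

/-- The closed unit Euclidean ball in `ℝ^d`. -/
noncomputable def unitBall (d : ℕ) : Set (EuclideanSpace ℝ (Fin d)) := Metric.closedBall 0 1

/-- The upper `K`-surface area of `A`:
`λ̄_K(∂A) = limsup_{δ→0⁺} (λ(A ⊕ δK) − λ(A))/δ`. -/
noncomputable def upperSurf {d : ℕ} (K A : Set (EuclideanSpace ℝ (Fin d))) : ℝ≥0∞ :=
  Filter.limsup (fun δ : ℝ => (volume (A + δ • K) - volume A) / ENNReal.ofReal δ)
    (nhdsWithin 0 (Set.Ioi 0))

/-!
For `ε ≥ 0` the radial map `w ↦ √(1 + ε / ‖w‖²) • w` sends the circle of radius `ρ` onto the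
circle of radius `√(ρ² + ε)` and has Jacobian determinant `1` in the plane, so it preserves area.
If a closed ball `B(z, r)` contains the origin, then along every ray the squared radial function
of `B(z, r + δ)` exceeds that of `B(z, r)` by at most `ε = 2((r + δ)² - r²)`. Hence `B(z, r + δ)`
is covered by the stretched image of `B(z, r)` and the disc of radius `√ε` about the origin, and for
a union `A` of such balls `λ(A ⊕ δB) ≤ λ(A) + 2π((r + δ)² - r²)`, whose growth rate at `δ = 0`
is `4πr`.
-/

open Metric
open scoped RealInnerProductSpace

section InnerProductSpace

variable {E : Type*} [NormedAddCommGroup E] [InnerProductSpace ℝ E]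

lemma smul_mem_closedBall_iff {u z : E} {r t : ℝ} (hu : ‖u‖ = 1) (hz : ‖z‖ ≤ r) (ht : 0 ≤ t) :
    t • u ∈ closedBall z r ↔ t ≤ ⟪z, u⟫ + √(r ^ 2 - ‖z‖ ^ 2 + ⟪z, u⟫ ^ 2) := by
  set c := ⟪z, u⟫
  have hr : 0 ≤ r := (norm_nonneg z).trans hz
  have hm : 0 ≤ r ^ 2 - ‖z‖ ^ 2 + c ^ 2 := by
    nlinarith [sq_nonneg c, pow_le_pow_left₀ (norm_nonneg z) hz 2]
  have hcm : c ≤ √(r ^ 2 - ‖z‖ ^ 2 + c ^ 2) :=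
    (le_abs_self c).trans (Real.abs_le_sqrt (by nlinarith [pow_le_pow_left₀ (norm_nonneg z) hz 2]))
  have hsq : ‖t • u - z‖ ^ 2 = (t - c) ^ 2 + ‖z‖ ^ 2 - c ^ 2 := by
    rw [norm_sub_sq_real, norm_smul, real_inner_smul_left, real_inner_comm, Real.norm_eq_abs,
      abs_of_nonneg ht, hu]
    ring
  rw [mem_closedBall, dist_eq_norm, ← sq_le_sq₀ (norm_nonneg _) hr, hsq, ← sub_le_iff_le_add']
  constructor
  · intro h
    exact ((Real.sq_le hm).1 (by linarith)).2
  · -- the near end `c - √(r ^ 2 - ‖z‖ ^ 2 + c ^ 2)` of the chord is `≤ 0 ≤ t`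
    intro h
    linarith [(Real.sq_le hm).2 ⟨by linarith, h⟩]

lemma sq_add_le_sq_add_two_mul_sub_sq {c m M : ℝ} (hcm : |c| ≤ m) (hmM : m ≤ M) :
    (c + M) ^ 2 ≤ (c + m) ^ 2 + 2 * (M ^ 2 - m ^ 2) := by
  nlinarith [mul_nonneg (sub_nonneg.2 hmM) (sub_nonneg.2 ((le_abs_self c).trans hcm)),
    mul_nonneg (sub_nonneg.2 hmM) (sub_nonneg.2 hmM)]

lemma sqrt_one_sub_smul_mem_closedBall {z w : E} {r δ ε : ℝ} (hz : ‖z‖ ≤ r) (hδ : 0 ≤ δ)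
    (hε : 2 * ((r + δ) ^ 2 - r ^ 2) ≤ ε) (hw : w ∈ closedBall z (r + δ)) (hwε : ε < ‖w‖ ^ 2) :
    √(1 - ε / ‖w‖ ^ 2) • w ∈ closedBall z r := by
  have hr : 0 ≤ r := (norm_nonneg z).trans hz
  have hs : 0 < ‖w‖ := by
    by_contra! h
    nlinarith [norm_nonneg w]
  set u := ‖w‖⁻¹ • w
  have hu : ‖u‖ = 1 := norm_smul_inv_norm (𝕜 := ℝ) (norm_pos_iff.1 hs)
  have hwu : w = ‖w‖ • u := (smul_inv_smul₀ hs.ne' w).symm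
  have hpoint : √(1 - ε / ‖w‖ ^ 2) • w = √(‖w‖ ^ 2 - ε) • u := by
    have h : ‖w‖ ^ 2 - ε = (1 - ε / ‖w‖ ^ 2) * ‖w‖ ^ 2 := by field_simp
    rw [h, Real.sqrt_mul' _ (sq_nonneg _), Real.sqrt_sq hs.le, mul_smul, ← hwu]
  have hzr : ‖z‖ ^ 2 ≤ r ^ 2 := pow_le_pow_left₀ (norm_nonneg z) hz 2
  have hwM := (smul_mem_closedBall_iff hu (hz.trans (by linarith)) hs.le).1 (hwu ▸ hw)
  set c := ⟪z, u⟫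
  set m := √(r ^ 2 - ‖z‖ ^ 2 + c ^ 2)
  set M := √((r + δ) ^ 2 - ‖z‖ ^ 2 + c ^ 2)
  have hm : m ^ 2 = r ^ 2 - ‖z‖ ^ 2 + c ^ 2 := Real.sq_sqrt (by nlinarith)
  have hM : M ^ 2 = (r + δ) ^ 2 - ‖z‖ ^ 2 + c ^ 2 := Real.sq_sqrt (by nlinarith)
  have hcm : |c| ≤ m := Real.abs_le_sqrt (by linarith)
  have hgrowth := sq_add_le_sq_add_two_mul_sub_sq hcm (Real.sqrt_le_sqrt (by nlinarith) : m ≤ M)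
  rw [hpoint, smul_mem_closedBall_iff hu hz (Real.sqrt_nonneg _), Real.sqrt_le_iff]
  refine ⟨by linarith [neg_abs_le c], ?_⟩
  nlinarith [pow_le_pow_left₀ hs.le hwM 2]

noncomputable def radialStretch (ε : ℝ) (w : E) : E := √(1 + ε / ‖w‖ ^ 2) • w

section radialStretch

variable {ε : ℝ} {w : E}

lemma norm_sq_radialStretch (hε : 0 ≤ ε) (hw : w ≠ 0) :
    ‖radialStretch ε w‖ ^ 2 = ‖w‖ ^ 2 + ε := by
  have hs : 0 < ‖w‖ ^ 2 := by positivity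
  rw [radialStretch, norm_smul, mul_pow, Real.norm_eq_abs, sq_abs, Real.sq_sqrt (by positivity)]
  field_simp

lemma injOn_radialStretch (hε : 0 ≤ ε) : InjOn (radialStretch ε) ({0}ᶜ : Set E) := by
  intro v hv w hw h
  have hnorm : ‖v‖ = ‖w‖ := by
    have := congrArg (‖·‖ ^ 2) h
    simp only [norm_sq_radialStretch hε hv, norm_sq_radialStretch hε hw, add_left_inj] at this
    exact (pow_left_inj₀ (norm_nonneg v) (norm_nonneg w) two_ne_zero).1 this
  rw [radialStretch, radialStretch, hnorm] at h
  exact smul_right_injective E (Real.sqrt_pos.2 (by positivity)).ne' h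

lemma radialStretch_sqrt_one_sub_smul (hε : 0 ≤ ε) (hwε : ε < ‖w‖ ^ 2) :
    radialStretch ε (√(1 - ε / ‖w‖ ^ 2) • w) = w := by
  have hs : 0 < ‖w‖ ^ 2 := hε.trans_lt hwε
  have ha : 0 < 1 - ε / ‖w‖ ^ 2 := by rw [sub_pos, div_lt_one hs]; exact hwε
  rw [radialStretch, norm_smul, mul_pow, Real.norm_eq_abs, sq_abs, Real.sq_sqrt ha.le, smul_smul,
    ← Real.sqrt_mul (by positivity)]
  convert one_smul ℝ w
  rw [Real.sqrt_eq_one]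
  field_simp
  ring

lemma hasFDerivAt_radialStretch (hε : 0 ≤ ε) (hw : w ≠ 0) :
    HasFDerivAt (radialStretch ε)
      (√(1 + ε / ‖w‖ ^ 2) • ContinuousLinearMap.id ℝ E +
        ((-ε / (‖w‖ ^ 4 * √(1 + ε / ‖w‖ ^ 2))) • innerSL ℝ w).smulRight w) w := by
  have hs : 0 < ‖w‖ ^ 2 := by positivity
  have hg := (((hasDerivAt_inv hs.ne').const_mul ε).const_add 1).sqrt (by positivity)
  refine ((hg.comp_hasFDerivAt w (hasStrictFDerivAt_norm_sq w).hasFDerivAt).smul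
    (hasFDerivAt_id w)).congr_fderiv ?_
  rw [← Nat.cast_smul_eq_nsmul ℝ, smul_smul, Function.comp_apply, id, ← div_eq_mul_inv]
  congr 3
  field_simp
  ring

lemma closedBall_subset_image_radialStretch_union {z : E} {r δ ε : ℝ} (hz : ‖z‖ ≤ r) (hδ : 0 ≤ δ)
    (hε : 2 * ((r + δ) ^ 2 - r ^ 2) ≤ ε) :
    closedBall z (r + δ) ⊆ radialStretch ε '' (closedBall z r \ {0}) ∪ closedBall 0 √ε := by
  have hε₀ : 0 ≤ ε := by nlinarith [(norm_nonneg z).trans hz]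
  intro w hw
  rcases le_or_gt (‖w‖ ^ 2) ε with hwε | hwε
  · exact Or.inr (mem_closedBall_zero_iff.2 (Real.le_sqrt_of_sq_le hwε))
  · have hw₀ : w ≠ 0 := norm_pos_iff.1 (by nlinarith [norm_nonneg w])
    have ha : 0 < 1 - ε / ‖w‖ ^ 2 := by
      rw [sub_pos, div_lt_one (hε₀.trans_lt hwε)]; exact hwε
    refine Or.inl ⟨_, ⟨sqrt_one_sub_smul_mem_closedBall hz hδ hε hw hwε, ?_⟩,
      radialStretch_sqrt_one_sub_smul hε₀ hwε⟩
    exact smul_ne_zero (Real.sqrt_pos.2 ha).ne' hw₀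

end radialStretch

end InnerProductSpace

local notation "ℝ²" => EuclideanSpace ℝ (Fin 2)

lemma det_smul_id_add_smulRight_innerSL (a b : ℝ) (w : ℝ²) :
    (a • ContinuousLinearMap.id ℝ ℝ² + (b • innerSL ℝ w).smulRight w).det =
      a * (a + b * ‖w‖ ^ 2) := by
  rw [ContinuousLinearMap.det, ← LinearMap.det_toMatrix (EuclideanSpace.basisFun (Fin 2) ℝ).toBasis,
    Matrix.det_fin_two, EuclideanSpace.norm_sq_eq, Fin.sum_univ_two]
  simp only [ContinuousLinearMap.toLinearMap_add, ContinuousLinearMap.toLinearMap_smul,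
    ContinuousLinearMap.coe_id, ContinuousLinearMap.coe_smulRight,
    ContinuousLinearMap.toLinearMap_innerSL_apply, LinearMap.toMatrix_apply,
    OrthonormalBasis.coe_toBasis, EuclideanSpace.basisFun_apply, LinearMap.add_apply,
    LinearMap.smul_apply, LinearMap.id_coe, id_eq, LinearMap.coe_smulRight, innerₛₗ_apply_apply,
    EuclideanSpace.inner_single_right, Real.ringHom_apply, one_mul, smul_eq_mul, map_add, map_smul,
    Finsupp.coe_add, Finsupp.coe_smul, Pi.add_apply, Pi.smul_apply,
    OrthonormalBasis.coe_toBasis_repr_apply, EuclideanSpace.basisFun_repr, PiLp.single_eq_same,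
    mul_one, ne_eq, zero_ne_one, not_false_eq_true, PiLp.single_eq_of_ne, mul_zero, zero_add,
    one_ne_zero, Real.norm_eq_abs, sq_abs]
  ring

lemma det_fderiv_radialStretch {ε : ℝ} {w : ℝ²} (hε : 0 ≤ ε) (hw : w ≠ 0) :
    (fderiv ℝ (radialStretch ε) w).det = 1 := by
  have hs : 0 < ‖w‖ ^ 2 := by positivity
  have ha : 0 < √(1 + ε / ‖w‖ ^ 2) := Real.sqrt_pos.2 (by positivity)
  rw [(hasFDerivAt_radialStretch hε hw).fderiv, det_smul_id_add_smulRight_innerSL]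
  field_simp
  rw [Real.sq_sqrt (by positivity)]
  field_simp
  ring

lemma volume_image_radialStretch {ε : ℝ} (hε : 0 ≤ ε) {s : Set ℝ²} (hs : MeasurableSet s)
    (h0 : (0 : ℝ²) ∉ s) : volume (radialStretch ε '' s) = volume s := by
  have hs₀ : s ⊆ {0}ᶜ := fun w hw h => h0 (h ▸ hw)
  rw [← lintegral_abs_det_fderiv_eq_addHaar_image volume hs
    (fun w hw => (hasFDerivAt_radialStretch hε (hs₀ hw)).differentiableAt.hasFDerivAt.hasFDerivWithinAt)
    ((injOn_radialStretch hε).mono hs₀), ← setLIntegral_one]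
  refine setLIntegral_congr_fun hs fun w hw => ?_
  rw [det_fderiv_radialStretch hε (hs₀ hw), abs_one, ENNReal.ofReal_one]

lemma volume_iUnion_closedBall_add_le {ι : Type*} [Countable ι] {y : ι → ℝ²} {c : ℝ²} {r δ : ℝ}
    (hy : ∀ i, ‖y i - c‖ ≤ r) (hδ : 0 ≤ δ) :
    volume (⋃ i, closedBall (y i) (r + δ)) ≤
      volume (⋃ i, closedBall (y i) r) + ENNReal.ofReal (2 * Real.pi * ((r + δ) ^ 2 - r ^ 2)) := by
  have htranslate : ∀ ρ, ⋃ i, closedBall (y i) ρ = c +ᵥ ⋃ i, closedBall (y i - c) ρ := fun ρ => by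
    simp [Set.vadd_set_iUnion, vadd_closedBall]
  rw [htranslate, htranslate, measure_vadd, measure_vadd]
  rcases isEmpty_or_nonempty ι with hι | ⟨⟨i₀⟩⟩
  · simp
  set ε := 2 * ((r + δ) ^ 2 - r ^ 2)
  have hε : 0 ≤ ε := by nlinarith [(norm_nonneg _).trans (hy i₀)]
  set V := ⋃ i, closedBall (y i - c) r
  have hcover : ⋃ i, closedBall (y i - c) (r + δ) ⊆ radialStretch ε '' (V \ {0}) ∪ closedBall 0 √ε :=
    iUnion_subset fun i => (closedBall_subset_image_radialStretch_union (hy i) hδ le_rfl).trans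
      (union_subset_union_left _ (image_mono (sdiff_subset_sdiff_left
        (subset_iUnion (fun i => closedBall (y i - c) r) i))))
  calc volume (⋃ i, closedBall (y i - c) (r + δ))
      ≤ volume (radialStretch ε '' (V \ {0})) + volume (closedBall (0 : ℝ²) √ε) :=
        (measure_mono hcover).trans (measure_union_le _ _)
    _ = volume (V \ {0}) + ENNReal.ofReal (Real.pi * ε) := by
        rw [volume_image_radialStretch hε
          ((MeasurableSet.iUnion fun i => measurableSet_closedBall).diff (measurableSet_singleton 0))
          (fun h => h.2 rfl), EuclideanSpace.volume_closedBall_fin_two,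
          ← ENNReal.ofReal_pow (Real.sqrt_nonneg _), Real.sq_sqrt hε,
          ← ENNReal.ofReal_mul hε, mul_comm]
    _ ≤ volume V + ENNReal.ofReal (2 * Real.pi * ((r + δ) ^ 2 - r ^ 2)) := by
        rw [show Real.pi * ε = 2 * Real.pi * ((r + δ) ^ 2 - r ^ 2) by ring]
        gcongr
        exact sdiff_subset

lemma range_add_closedBall_zero {ι F : Type*} [SeminormedAddCommGroup F] (x : ι → F) (r : ℝ) :
    range x + closedBall 0 r = ⋃ i, closedBall (x i) r := by
  simp [← iUnion_singleton_eq_range, iUnion_add]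

lemma upperSurf_le_of_volume_add_smul_le {d : ℕ} {K A : Set (EuclideanSpace ℝ (Fin d))} {L C : ℝ}
    (h : ∀ δ > 0, volume (A + δ • K) ≤ volume A + ENNReal.ofReal (δ * (L + C * δ))) :
    upperSurf K A ≤ ENNReal.ofReal L := by
  have hlim : Tendsto (fun δ => ENNReal.ofReal (L + C * δ)) (nhdsWithin 0 (Ioi 0))
      (nhds (ENNReal.ofReal L)) := by
    refine ENNReal.tendsto_ofReal ?_
    simpa using (tendsto_nhdsWithin_of_tendsto_nhds ((continuous_const_mul C).tendsto 0)).const_add L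
  refine (limsup_le_limsup (eventually_nhdsWithin_of_forall fun δ (hδ : 0 < δ) => ?_)).trans_eq
    hlim.limsup_eq
  have hδA := h δ hδ
  rw [ENNReal.ofReal_mul hδ.le] at hδA
  exact ENNReal.div_le_of_le_mul' (tsub_le_iff_left.2 hδA)

theorem perimeter_parallel_set_le_four_pi_general
    (N : ℕ) (x : Fin (N + 1) → EuclideanSpace ℝ (Fin 2))
    (hx : ∀ i, ‖x i - x 0‖ ≤ 1) :
    upperSurf (unitBall 2) (Set.range x + unitBall 2) ≤ ENNReal.ofReal (4 * Real.pi) := by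
  refine upperSurf_le_of_volume_add_smul_le (C := 2 * Real.pi) fun δ hδ => ?_
  rw [unitBall, smul_unitClosedBall, Real.norm_eq_abs, abs_of_pos hδ, add_assoc,
    closedBall_add_closedBall zero_le_one hδ.le, zero_add, range_add_closedBall_zero,
    range_add_closedBall_zero]
  convert volume_iUnion_closedBall_add_le hx hδ.le using 3
  ring

/-- If `x_0, …, x_N ∈ ℝ²` (with `N ≥ 1`) all lie within Euclidean distance `1`
of `x_0`, and `A = {x_0, …, x_N}`, then the upper surface area (perimeter) of
`A_{⊕1} = A ⊕ B` is at most `4π`, the perimeter of the disc of radius `2`. -/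
theorem perimeter_parallel_set_le_four_pi
    (N : ℕ) (hN : 1 ≤ N) (x : Fin (N + 1) → EuclideanSpace ℝ (Fin 2))
    (hx : ∀ i, ‖x i - x 0‖ ≤ 1) :
    upperSurf (unitBall 2) (Set.range x + unitBall 2) ≤ ENNReal.ofReal (4 * Real.pi) :=
  perimeter_parallel_set_le_four_pi_general N x hx
end

section
/- Let d ≥ 2, r > 0, and let x_i, x_0 ∈ ℝ^d with ‖x_0 − x_i‖₂ ≤ r. Let S be a measurable subset of the sphere {x ∈ ℝ^d : ‖x − x_i‖₂ = r} with x_0 ∉ S. Then for every x ∈ S the pointwise inequality ⟨x − x_i, x − x_0⟩ / (r · ‖x − x_0‖₂^d) ≥ 1/(2r)^{d−1} holds, and consequently ∫_S ⟨x − x_i, x − x_0⟩ / (r · ‖x − x_0‖₂^d) dH^{d−1}(x) ≥ H^{d−1}(S) / (2^{d−1} r^{d−1}), where H^{d−1} is the (d−1)-dimensional Hausdorff measure. (Equivalently, the solid angle subtended by S at x_0 is at least 2^{−(d−1)} times the solid angle subtended by S at the center x_i.) -/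
open MeasureTheory Set Filter
open scoped ENNReal

/-! For `x` on the sphere, `x0` lies in the closed ball, so `‖x - x0‖ ≤ 2r`, and expanding
`‖x0 - xi‖² ≤ r² = ‖x - xi‖²` gives `2⟪x - xi, x - x0⟫ ≥ ‖x - x0‖²`. Hence the density is at least
`1 / (2r‖x - x0‖^(d-2)) ≥ 1 / (2r)^(d-1)`, and integrating this constant bound over `S` gives the
measure bound. -/

theorem one_div_two_mul_pow_le_div_mul_pow {r n a : ℝ} {d : ℕ} (hd : 2 ≤ d)
    (hn : 0 < n) (hnr : n ≤ 2 * r) (ha : n ^ 2 ≤ 2 * a) :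
    1 / (2 * r) ^ (d - 1) ≤ a / (r * n ^ d) := by
  obtain ⟨k, rfl⟩ : ∃ k, d = k + 2 := ⟨d - 2, by omega⟩
  have hr : 0 < r := by linarith
  have hpow : n ^ k ≤ (2 * r) ^ k := pow_le_pow_left₀ hn.le hnr k
  rw [show k + 2 - 1 = k + 1 by omega, div_le_div_iff₀ (by positivity) (by positivity)]
  calc 1 * (r * n ^ (k + 2)) = r * n ^ k * n ^ 2 := by ring
    _ ≤ r * (2 * r) ^ k * (2 * a) := by gcongr
    _ = a * (2 * r) ^ (k + 1) := by ring

theorem norm_sub_le_two_mul_of_mem_sphere {E : Type*} [SeminormedAddCommGroup E]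
    {xi x0 x : E} {r : ℝ} (hx : x ∈ Metric.sphere xi r) (hx0 : ‖x0 - xi‖ ≤ r) :
    ‖x - x0‖ ≤ 2 * r := by
  have hxr : ‖x - xi‖ = r := mem_sphere_iff_norm.mp hx
  have := norm_sub_le_norm_sub_add_norm_sub x xi x0
  rw [norm_sub_rev xi x0] at this
  linarith

section SphereGeometry

variable {E : Type*} [NormedAddCommGroup E] [InnerProductSpace ℝ E]

theorem sq_norm_sub_le_two_mul_inner_of_mem_sphere {xi x0 x : E} {r : ℝ}
    (hx : x ∈ Metric.sphere xi r) (hx0 : ‖x0 - xi‖ ≤ r) :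
    ‖x - x0‖ ^ 2 ≤ 2 * inner ℝ (x - xi) (x - x0) := by
  have hxr : ‖x - xi‖ = r := mem_sphere_iff_norm.mp hx
  have hexpand := norm_sub_sq_real (x - xi) (x - x0)
  rw [sub_sub_sub_cancel_left, hxr] at hexpand
  nlinarith [norm_nonneg (x0 - xi)]

theorem one_div_two_mul_pow_le_inner_div_of_mem_sphere {xi x0 x : E} {r : ℝ} {d : ℕ}
    (hd : 2 ≤ d) (hx : x ∈ Metric.sphere xi r) (hx0 : ‖x0 - xi‖ ≤ r) (hne : x ≠ x0) :
    1 / (2 * r) ^ (d - 1) ≤ inner ℝ (x - xi) (x - x0) / (r * ‖x - x0‖ ^ d) :=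
  one_div_two_mul_pow_le_div_mul_pow hd (norm_sub_pos_iff.mpr hne)
    (norm_sub_le_two_mul_of_mem_sphere hx hx0)
    (sq_norm_sub_le_two_mul_inner_of_mem_sphere hx hx0)

end SphereGeometry

theorem div_ofReal_le_setLIntegral_ofReal {α : Type*} [MeasurableSpace α] {μ : Measure α}
    {s : Set α} (hs : MeasurableSet s) {c : ℝ} (hc : 0 < c) {f : α → ℝ}
    (hf : ∀ x ∈ s, 1 / c ≤ f x) :
    μ s / ENNReal.ofReal c ≤ ∫⁻ x in s, ENNReal.ofReal (f x) ∂μ :=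
  calc μ s / ENNReal.ofReal c = ∫⁻ _ in s, ENNReal.ofReal (1 / c) ∂μ := by
        rw [setLIntegral_const, one_div, ENNReal.ofReal_inv_of_pos hc, div_eq_mul_inv, mul_comm]
    _ ≤ ∫⁻ x in s, ENNReal.ofReal (f x) ∂μ :=
        setLIntegral_mono' hs fun x hx => ENNReal.ofReal_le_ofReal (hf x hx)

/-- Let `d ≥ 2`, `r > 0`, `‖x_0 − x_i‖₂ ≤ r`, and let `S` be a measurable
subset of the sphere of radius `r` centered at `x_i` with `x_0 ∉ S`. Then pointwise on `S`
the solid-angle density seen from `x_0`, namely `⟨x − x_i, x − x_0⟩ / (r‖x − x_0‖^d)`,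
is at least `1/(2r)^{d−1}`, and consequently its integral over `S` with respect to the
`(d−1)`-dimensional Hausdorff measure is at least `H^{d−1}(S)/(2^{d−1} r^{d−1})`. -/
theorem inscribed_solid_angle_bound
    (d : ℕ) (hd : 2 ≤ d) (r : ℝ) (hr : 0 < r)
    (xi x0 : EuclideanSpace ℝ (Fin d)) (hx0 : ‖x0 - xi‖ ≤ r)
    (S : Set (EuclideanSpace ℝ (Fin d))) (hS : MeasurableSet S)
    (hSsub : S ⊆ Metric.sphere xi r) (hx0S : x0 ∉ S) :
    (∀ x ∈ S,
      (1 : ℝ) / (2 * r) ^ (d - 1) ≤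
        (inner ℝ (x - xi) (x - x0) : ℝ) / (r * ‖x - x0‖ ^ d)) ∧
    (μH[(d : ℝ) - 1]) S / ENNReal.ofReal (2 ^ (d - 1) * r ^ (d - 1)) ≤
      ∫⁻ x in S, ENNReal.ofReal
        ((inner ℝ (x - xi) (x - x0) : ℝ) / (r * ‖x - x0‖ ^ d)) ∂(μH[(d : ℝ) - 1]) := by
  have hpointwise : ∀ x ∈ S, (1 : ℝ) / (2 * r) ^ (d - 1) ≤
      (inner ℝ (x - xi) (x - x0) : ℝ) / (r * ‖x - x0‖ ^ d) := fun x hx =>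
    one_div_two_mul_pow_le_inner_div_of_mem_sphere hd (hSsub hx) hx0
      (ne_of_mem_of_not_mem hx hx0S)
  refine ⟨hpointwise, ?_⟩
  rw [← mul_pow]
  exact div_ofReal_le_setLIntegral_ofReal hS (by positivity) hpointwise
end

section
/- Let d ≥ 2, r > 0, δ > 0, and N ≥ 1. Let x_0, x_1, …, x_N ∈ ℝ^d satisfy ‖x_i − x_0‖₂ ≤ r for all 0 ≤ i ≤ N, and let A = {x_0, x_1, …, x_N}. Then λ(A_{⊕(r+δ)} \ A_{⊕r}) ≤ 2^{d−1} ω_d ((r+δ)^d − r^d). -/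
open MeasureTheory Set Filter
open scoped ENNReal Pointwise

/-- `ω_d = π^{d/2}/Γ(1+d/2)`, the volume of the unit Euclidean ball in `ℝ^d`. -/
noncomputable def omegaVol (d : ℕ) : ℝ := Real.pi ^ ((d : ℝ) / 2) / Real.Gamma (1 + (d : ℝ) / 2)

/-!
Translate `x 0` to the origin and integrate in polar coordinates. Fix a direction `u` and let
`F` be the set of radii `ρ > 0` with `ρ u` in the annulus `S = A_{⊕s} \ A_{⊕r}`, `s = r + δ`.
If `ρ ≤ b` are in `F` and `b u` lies within `s` of `x_i`, then `ρ u` is not within `r` of `x_i`,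
and since all `x_i` lie within `r` of the origin this forces `b² - ρ b ≤ s² - r²`. Hence `F` lies
in `[b₀ - (s² - r²)/b₀, b₀]` with `b₀ = sup F ≤ 2r + δ`, a set of radial measure
`ρ^{d-1} dρ` at most `(2r + δ)^{d-1} δ`. Integrating over the sphere, of measure `d ω_d`,
gives `d ω_d δ (2r + δ)^{d-1}`, and comparing binomial coefficients bounds this by
`2^{d-1} ω_d ((r + δ)^d - r^d)`.
-/

open Metric Module

theorem Real.subset_Icc_csSup_sub_div {F : Set ℝ} {Δ : ℝ} (hΔ : 0 ≤ Δ) (hne : F.Nonempty)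
    (hbdd : BddAbove F) (hpos : ∀ ρ ∈ F, 0 < ρ) (h : ∀ ρ ∈ F, ∀ b ∈ F, ρ ≤ b → b ^ 2 - ρ * b ≤ Δ) :
    F ⊆ Icc (sSup F - Δ / sSup F) (sSup F) := by
  intro ρ hρ
  have hρb : ρ ≤ sSup F := le_csSup hbdd hρ
  have hF : F ⊆ {b | b ^ 2 - ρ * b ≤ Δ} := fun b hb ↦ by
    show b ^ 2 - ρ * b ≤ Δ
    rcases le_total ρ b with hρb | hbρ
    · exact h ρ hρ b hb hρb
    · nlinarith [mul_nonneg (hpos b hb).le (sub_nonneg.2 hbρ)]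
  have hsup : sSup F ^ 2 - ρ * sSup F ≤ Δ :=
    (isClosed_le (by fun_prop) continuous_const).closure_subset_iff.2 hF
      (csSup_mem_closure hne hbdd)
  have hsup_pos : 0 < sSup F := (hpos ρ hρ).trans_le hρb
  refine ⟨?_, hρb⟩
  rw [sub_le_comm, le_div_iff₀ hsup_pos]
  linarith

namespace MeasureTheory.Measure

theorem volumeIoiPow_preimage_val_Icc_le (n : ℕ) {a b : ℝ} (hb : 0 ≤ b) :
    volumeIoiPow n (Subtype.val ⁻¹' Icc a b) ≤ ENNReal.ofReal (b ^ n * (b - a)) := by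
  rw [volumeIoiPow, withDensity_apply _ (measurable_subtype_coe measurableSet_Icc),
    setLIntegral_subtype measurableSet_Ioi _ fun x ↦ ENNReal.ofReal (x ^ n),
    Subtype.image_preimage_coe, ENNReal.ofReal_mul (pow_nonneg hb n), ← Real.volume_Icc,
    ← setLIntegral_const]
  calc ∫⁻ x in Ioi 0 ∩ Icc a b, ENNReal.ofReal (x ^ n)
      ≤ ∫⁻ _ in Ioi 0 ∩ Icc a b, ENNReal.ofReal (b ^ n) :=
        setLIntegral_mono' (measurableSet_Ioi.inter measurableSet_Icc) fun x hx ↦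
          ENNReal.ofReal_le_ofReal (pow_le_pow_left₀ hx.1.out.le hx.2.2 n)
    _ ≤ ∫⁻ _ in Icc a b, ENNReal.ofReal (b ^ n) := lintegral_mono_set inter_subset_right

variable {E : Type*} [NormedAddCommGroup E] [NormedSpace ℝ E] [FiniteDimensional ℝ E]
  [MeasurableSpace E] [BorelSpace E]

theorem measure_le_toSphere_univ_mul_of_forall_ray_le (μ : Measure E) [μ.IsAddHaarMeasure] (c : E)
    {S : Set E} (hS : MeasurableSet S) (hc : c ∉ S) {C : ℝ≥0∞}
    (hC : ∀ u : sphere (0 : E) 1,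
      volumeIoiPow (finrank ℝ E - 1) {ρ : Ioi (0 : ℝ) | c + (ρ : ℝ) • (u : E) ∈ S} ≤ C) :
    μ S ≤ μ.toSphere univ * C := by
  set T : Set (sphere (0 : E) 1 × Ioi (0 : ℝ)) := {p | c + (p.2 : ℝ) • (p.1 : E) ∈ S}
  have hT : MeasurableSet T :=
    hS.preimage (by fun_prop : Continuous fun p : sphere (0 : E) 1 × Ioi (0 : ℝ) ↦
      c + (p.2 : ℝ) • (p.1 : E)).measurable
  have hpolar : homeomorphUnitSphereProd E ⁻¹' T = Subtype.val ⁻¹' ((c + ·) ⁻¹' S) := by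
    ext z
    simp only [T, mem_preimage, mem_ofPred_eq, homeomorphUnitSphereProd_apply_snd_coe,
      homeomorphUnitSphereProd_apply_fst_coe, smul_inv_smul₀ (norm_ne_zero_iff.2 z.2)]
  have h0 : (c + ·) ⁻¹' S ⊆ {0}ᶜ := by
    rintro y hy (rfl : y = 0)
    exact hc (by simpa using hy)
  calc μ S = μ ((c + ·) ⁻¹' S) := (measure_preimage_add μ c S).symm
    _ = μ.comap Subtype.val (Subtype.val ⁻¹' ((c + ·) ⁻¹' S)) := by
      rw [comap_subtype_coe_apply (measurableSet_singleton 0).compl, Subtype.image_preimage_coe,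
        inter_eq_right.2 h0]
    _ = (μ.toSphere.prod (volumeIoiPow (finrank ℝ E - 1))) T := by
      rw [← hpolar]
      exact (μ.measurePreserving_homeomorphUnitSphereProd).measure_preimage hT.nullMeasurableSet
    _ ≤ ∫⁻ _, C ∂μ.toSphere := by
      rw [prod_apply hT]
      exact lintegral_mono hC
    _ = μ.toSphere univ * C := by rw [lintegral_const, mul_comm]

end MeasureTheory.Measure

section InnerProductSpace

variable {E : Type*} [NormedAddCommGroup E] [InnerProductSpace ℝ E] {ι : Type*}

theorem norm_smul_sub_le_of_mul_sq_le {r s t : ℝ} {v y : E} (hv : ‖v‖ ≤ r) (hy : ‖y - v‖ ≤ s)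
    (ht₀ : 0 ≤ t) (ht₁ : t ≤ 1) (ht : t * ‖y‖ ^ 2 ≤ ‖y‖ ^ 2 - (s ^ 2 - r ^ 2)) :
    ‖t • y - v‖ ≤ r := by
  have hr : 0 ≤ r := (norm_nonneg v).trans hv
  have key : ‖t • y - v‖ ^ 2 = t * ‖y - v‖ ^ 2 + (1 - t) * ‖v‖ ^ 2 - t * (1 - t) * ‖y‖ ^ 2 := by
    rw [norm_sub_sq_real, norm_sub_sq_real, real_inner_smul_left, norm_smul,
      Real.norm_of_nonneg ht₀]
    ring
  have h₁ : t * ‖y - v‖ ^ 2 ≤ t * s ^ 2 := by gcongr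
  have h₂ : (1 - t) * ‖v‖ ^ 2 ≤ (1 - t) * r ^ 2 := by gcongr
  have h₃ : t * (t * ‖y‖ ^ 2) ≤ t * (‖y‖ ^ 2 - (s ^ 2 - r ^ 2)) := by gcongr
  rw [← pow_le_pow_iff_left₀ (norm_nonneg _) hr two_ne_zero, key]
  nlinarith

theorem sq_sub_mul_le_of_mem_iUnion_closedBall {x : ι → E} {c u : E} {r s ρ b : ℝ}
    (hx : ∀ i, ‖x i - c‖ ≤ r) (hu : ‖u‖ = 1) (hρ : 0 < ρ) (hρb : ρ ≤ b)
    (hρr : c + ρ • u ∉ ⋃ i, closedBall (x i) r) (hbs : c + b • u ∈ ⋃ i, closedBall (x i) s) :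
    b ^ 2 - ρ * b ≤ s ^ 2 - r ^ 2 := by
  obtain ⟨i, hi⟩ := mem_iUnion.1 hbs
  rw [mem_closedBall, dist_eq_norm] at hi
  have hb : 0 < b := hρ.trans_le hρb
  have hbu : ‖b • u‖ = b := by rw [norm_smul, hu, mul_one, Real.norm_of_nonneg hb.le]
  by_contra! h
  refine hρr (mem_iUnion.2 ⟨i, ?_⟩)
  rw [mem_closedBall, dist_eq_norm,
    show c + ρ • u - x i = (ρ / b) • (b • u) - (x i - c) by
      rw [smul_smul, div_mul_cancel₀ _ hb.ne']; abel]
  refine norm_smul_sub_le_of_mul_sq_le (s := s) (hx i) ?_ (by positivity)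
    (div_le_one_of_le₀ hρb hb.le) ?_
  · rwa [show b • u - (x i - c) = c + b • u - x i by abel]
  · rw [hbu, div_mul_eq_mul_div, div_le_iff₀ hb]
    nlinarith

theorem volumeIoiPow_ray_iUnion_closedBall_diff_le (k : ℕ) {x : ι → E} {c u : E} {r δ : ℝ}
    (hr : 0 ≤ r) (hδ : 0 ≤ δ) (hx : ∀ i, ‖x i - c‖ ≤ r) (hu : ‖u‖ = 1) :
    Measure.volumeIoiPow (k + 1) {ρ : Ioi (0 : ℝ) |
        c + (ρ : ℝ) • u ∈ (⋃ i, closedBall (x i) (r + δ)) \ ⋃ i, closedBall (x i) r} ≤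
      ENNReal.ofReal (δ * (2 * r + δ) ^ (k + 1)) := by
  set A := (⋃ i, closedBall (x i) (r + δ)) \ ⋃ i, closedBall (x i) r
  set F : Set ℝ := {ρ | 0 < ρ ∧ c + ρ • u ∈ A}
  rcases F.eq_empty_or_nonempty with hF | hF
  · have : {ρ : Ioi (0 : ℝ) | c + (ρ : ℝ) • u ∈ A} = ∅ :=
      eq_empty_of_forall_notMem fun ρ hρ ↦ hF.subset ⟨ρ.2, hρ⟩
    simp [this]
  have hFM : F ⊆ Iic (2 * r + δ) := by
    rintro ρ ⟨hρ, hρA⟩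
    obtain ⟨i, hi⟩ := mem_iUnion.1 hρA.1
    rw [mem_closedBall, dist_eq_norm] at hi
    calc ρ = ‖ρ • u‖ := by rw [norm_smul, hu, mul_one, Real.norm_of_nonneg hρ.le]
      _ = ‖(c + ρ • u - x i) + (x i - c)‖ := by congr 1; abel
      _ ≤ (r + δ) + r := (norm_add_le _ _).trans (add_le_add hi (hx i))
      _ = 2 * r + δ := by ring
  have hFI := Real.subset_Icc_csSup_sub_div (Δ := (r + δ) ^ 2 - r ^ 2) (by nlinarith) hF
    ⟨_, hFM⟩ (fun ρ hρ ↦ hρ.1) fun ρ hρ b hb hρb ↦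
      sq_sub_mul_le_of_mem_iUnion_closedBall hx hu hρ.1 hρb hρ.2.2 hb.2.1
  set b₀ := sSup F
  have hb₀ : 0 < b₀ := by
    obtain ⟨ρ, hρ⟩ := hF
    exact hρ.1.trans_le (hFI hρ).2
  calc _ ≤ Measure.volumeIoiPow (k + 1)
        (Subtype.val ⁻¹' Icc (b₀ - ((r + δ) ^ 2 - r ^ 2) / b₀) b₀) :=
        measure_mono fun ρ hρ ↦ hFI ⟨ρ.2, hρ⟩
    _ ≤ ENNReal.ofReal (b₀ ^ (k + 1) * (b₀ - (b₀ - ((r + δ) ^ 2 - r ^ 2) / b₀))) :=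
        Measure.volumeIoiPow_preimage_val_Icc_le _ hb₀.le
    _ ≤ _ := by
      refine ENNReal.ofReal_le_ofReal ?_
      calc b₀ ^ (k + 1) * (b₀ - (b₀ - ((r + δ) ^ 2 - r ^ 2) / b₀))
          = δ * (2 * r + δ) * b₀ ^ k := by field_simp; ring
        _ ≤ δ * (2 * r + δ) * (2 * r + δ) ^ k := by gcongr; exact csSup_le hF hFM
        _ = δ * (2 * r + δ) ^ (k + 1) := by ring

theorem measure_iUnion_closedBall_diff_le [FiniteDimensional ℝ E] [MeasurableSpace E]
    [BorelSpace E] (μ : Measure E) [μ.IsAddHaarMeasure] [Countable ι] (hE : 2 ≤ finrank ℝ E)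
    (x : ι → E) (i₀ : ι) {r δ : ℝ} (hδ : 0 ≤ δ) (hx : ∀ i, ‖x i - x i₀‖ ≤ r) :
    μ ((⋃ i, closedBall (x i) (r + δ)) \ ⋃ i, closedBall (x i) r) ≤
      μ.toSphere univ * ENNReal.ofReal (δ * (2 * r + δ) ^ (finrank ℝ E - 1)) := by
  have hr : 0 ≤ r := by simpa using hx i₀
  obtain ⟨k, hk⟩ : ∃ k, finrank ℝ E - 1 = k + 1 := ⟨finrank ℝ E - 2, by omega⟩
  refine Measure.measure_le_toSphere_univ_mul_of_forall_ray_le μ (x i₀) (by measurability)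
    (fun h ↦ h.2 (mem_iUnion.2 ⟨i₀, mem_closedBall_self hr⟩)) fun u ↦ ?_
  rw [hk]
  exact volumeIoiPow_ray_iUnion_closedBall_diff_le k hr hδ hx (norm_eq_of_mem_sphere u)

end InnerProductSpace

theorem Nat.add_one_mul_choose_mul_two_pow_le {m k : ℕ} (hk : k ≤ m) :
    (m + 1) * m.choose k * 2 ^ k ≤ 2 ^ m * (m + 1).choose k := by
  have hchoose : (m + 1) * m.choose k = (m + 1).choose k * ((m - k) + 1) := by
    rw [Nat.add_one_mul_choose_eq, Nat.choose_succ_right_eq]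
    congr 1
    omega
  calc (m + 1) * m.choose k * 2 ^ k = (m + 1).choose k * ((m - k) + 1) * 2 ^ k := by
        rw [hchoose]
    _ ≤ (m + 1).choose k * 2 ^ (m - k) * 2 ^ k := by gcongr; exact Nat.lt_two_pow_self
    _ = 2 ^ m * (m + 1).choose k := by
        rw [mul_assoc, ← pow_add, Nat.sub_add_cancel hk, Nat.mul_comm]

/-- The midpoint bound `(m+1) (b - a) ((a + b)/2)^m ≤ b^{m+1} - a^{m+1}` for the convex function
`t ↦ t^m` on `[a, b] = [r, r + δ]`, proved coefficientwise in the binomial expansions. -/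
theorem add_one_mul_mul_two_mul_add_pow_le (m : ℕ) {r δ : ℝ} (hr : 0 ≤ r) (hδ : 0 ≤ δ) :
    (m + 1) * δ * (2 * r + δ) ^ m ≤ 2 ^ m * ((r + δ) ^ (m + 1) - r ^ (m + 1)) := by
  rw [add_pow (2 * r) δ, add_pow r δ, Finset.sum_range_succ _ (m + 1), Nat.sub_self, pow_zero,
    Nat.choose_self, Nat.cast_one, mul_one, mul_one, add_sub_cancel_right, Finset.mul_sum,
    Finset.mul_sum]
  refine Finset.sum_le_sum fun k hk ↦ ?_
  have hkm : k ≤ m := Nat.lt_succ_iff.1 (Finset.mem_range.1 hk)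
  have hcoeff : ((m + 1) * m.choose k * 2 ^ k : ℝ) ≤ 2 ^ m * (m + 1).choose k := by
    exact_mod_cast Nat.add_one_mul_choose_mul_two_pow_le hkm
  have hδpow : δ * δ ^ (m - k) = δ ^ (m + 1 - k) := by
    rw [← pow_succ', Nat.sub_add_comm hkm]
  calc (m + 1) * δ * ((2 * r) ^ k * δ ^ (m - k) * m.choose k)
      = ((m + 1) * m.choose k * 2 ^ k) * (r ^ k * (δ * δ ^ (m - k))) := by ring
    _ ≤ (2 ^ m * (m + 1).choose k) * (r ^ k * δ ^ (m + 1 - k)) := by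
        rw [hδpow]; gcongr
    _ = 2 ^ m * (r ^ k * δ ^ (m + 1 - k) * (m + 1).choose k) := by ring

theorem omegaVol_nonneg (d : ℕ) : 0 ≤ omegaVol d := by
  unfold omegaVol
  positivity

theorem volume_ball_zero_one_eq_omegaVol (d : ℕ) [NeZero d] :
    volume (ball (0 : EuclideanSpace ℝ (Fin d)) 1) = ENNReal.ofReal (omegaVol d) := by
  rw [EuclideanSpace.volume_ball, ENNReal.ofReal_one, one_pow, one_mul, Fintype.card_fin, omegaVol,
    Real.sqrt_eq_rpow, ← Real.rpow_natCast, ← Real.rpow_mul Real.pi_pos.le, add_comm]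
  congr 3
  ring

theorem range_add_smul_unitBall {d : ℕ} {ι : Type*} (x : ι → EuclideanSpace ℝ (Fin d)) {t : ℝ}
    (ht : 0 ≤ t) : Set.range x + t • unitBall d = ⋃ i, closedBall (x i) t := by
  rw [unitBall, smul_unitClosedBall_of_nonneg ht, ← iUnion_singleton_eq_range, iUnion_add]
  simp_rw [singleton_add_closedBall_zero]

theorem volume_annulus_parallel_set_le_general
    (d : ℕ) (hd : 2 ≤ d) (r δ : ℝ) (hr : 0 < r) (hδ : 0 < δ) (N : ℕ)
    (x : Fin (N + 1) → EuclideanSpace ℝ (Fin d))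
    (hx : ∀ i, ‖x i - x 0‖ ≤ r) :
    volume ((Set.range x + (r + δ) • unitBall d) \ (Set.range x + r • unitBall d)) ≤
      ENNReal.ofReal (2 ^ (d - 1) * omegaVol d * ((r + δ) ^ d - r ^ d)) := by
  obtain ⟨m, rfl⟩ : ∃ m, d = m + 1 := ⟨d - 1, by omega⟩
  have hsphere : (volume : Measure (EuclideanSpace ℝ (Fin (m + 1)))).toSphere univ =
      ENNReal.ofReal ((m + 1) * omegaVol (m + 1)) := by
    rw [Measure.toSphere_apply_univ, finrank_euclideanSpace_fin, volume_ball_zero_one_eq_omegaVol,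
      ENNReal.ofReal_mul (by positivity), ← Nat.cast_succ, ENNReal.ofReal_natCast]
  have hbinom := add_one_mul_mul_two_mul_add_pow_le m hr.le hδ.le
  rw [range_add_smul_unitBall x (by positivity), range_add_smul_unitBall x hr.le,
    Nat.add_sub_cancel]
  calc _ ≤ _ := measure_iUnion_closedBall_diff_le volume (by rwa [finrank_euclideanSpace_fin])
        x 0 hδ.le hx
    _ = ENNReal.ofReal (omegaVol (m + 1) * ((m + 1) * δ * (2 * r + δ) ^ m)) := by
        rw [hsphere, finrank_euclideanSpace_fin, Nat.add_sub_cancel,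
          ← ENNReal.ofReal_mul' (by positivity)]
        ring_nf
    _ ≤ ENNReal.ofReal (omegaVol (m + 1) * (2 ^ m * ((r + δ) ^ (m + 1) - r ^ (m + 1)))) :=
        ENNReal.ofReal_le_ofReal (mul_le_mul_of_nonneg_left hbinom (omegaVol_nonneg _))
    _ = _ := by ring_nf

/-- For `d ≥ 2`, `r, δ > 0`, `N ≥ 1` and points `x_0,…, x_N ∈ ℝ^d` with
`‖x_i − x_0‖₂ ≤ r`, setting `A = {x_0, …, x_N}` we have
`λ(A_{⊕(r+δ)} \ A_{⊕r}) ≤ 2^{d−1} ω_d ((r+δ)^d − r^d)`. -/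
theorem volume_annulus_parallel_set_le
    (d : ℕ) (hd : 2 ≤ d) (r δ : ℝ) (hr : 0 < r) (hδ : 0 < δ) (N : ℕ) (hN : 1 ≤ N)
    (x : Fin (N + 1) → EuclideanSpace ℝ (Fin d))
    (hx : ∀ i, ‖x i - x 0‖ ≤ r) :
    volume ((Set.range x + (r + δ) • unitBall d) \ (Set.range x + r • unitBall d)) ≤
      ENNReal.ofReal (2 ^ (d - 1) * omegaVol d * ((r + δ) ^ d - r ^ d)) :=
  volume_annulus_parallel_set_le_general d hd r δ hr hδ N x hx
end

section
/- Let d ≥ 1, r > 0, δ > 0, and N ≥ 1. Let x_0, x_1, …, x_N ∈ ℝ^d satisfy ‖x_i − x_0‖_∞ ≤ r for all 0 ≤ i ≤ N, and let A = {x_0, x_1, …, x_N}. Then λ(A_{⊞(r+δ)} \ A_{⊞r}) ≤ 2^{2d−1} ((r+δ)^d − r^d). -/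
/-!
All cubes of radius `ρ ≥ r` around the points `x_i` contain `x_0`, so every line parallel to a
coordinate axis meets their union in an interval. Write `ℝ^(n+1) = ℝ × ℝ^n` and let `r ≤ a ≤ b`.
The annulus between the radii `a` and `b` splits into the part gained by thickening the first
coordinate only, whose fibres over `ℝ^n` are two intervals of length `b - a` lying over a cube of
side `2(r + b)`, and the part gained by then thickening the other coordinates, whose fibres over
`ℝ` are annuli of subfamilies in `ℝ^n`, nonempty only on an interval of length `2(r + a)`.
Induction on the dimension gives `λ(A_{⊞b} \ A_{⊞a}) ≤ 2^d ((r + b)^d - (r + a)^d)`; for `a = r`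
and `b = r + δ`, midpoint convexity of `t ↦ t^d` bounds this by `2^(2d-1) ((r + δ)^d - r^d)`.
-/

open MeasureTheory Set Filter
open scoped ENNReal Pointwise

/-- The closed unit `ℓ∞` ball `C = [−1,1]^d` in `ℝ^d`. -/
def unitCube (d : ℕ) : Set (EuclideanSpace ℝ (Fin d)) := {x | ∀ i, |x i| ≤ 1}

open Metric

namespace MeasureTheory.Measure

variable {α β : Type*} [MeasurableSpace α] [MeasurableSpace β] {μ : Measure α} {ν : Measure β}
  {S : Set (α × β)} {C : ℝ≥0∞}

theorem prod_apply_le_mul_of_fibers [SFinite ν] (hS : MeasurableSet S) {K : Set α}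
    (hSK : ∀ z ∈ S, z.1 ∈ K) (hC : ∀ x, ν (Prod.mk x ⁻¹' S) ≤ C) : μ.prod ν S ≤ C * μ K := by
  rw [prod_apply hS]
  refine (lintegral_mono fun x => ?_).trans (lintegral_indicator_const_le K C)
  by_cases hx : x ∈ K
  · simpa [hx] using hC x
  · have : Prod.mk x ⁻¹' S = ∅ := eq_empty_of_forall_notMem fun y hy => hx (hSK _ hy)
    simp [this]

theorem prod_apply_le_mul_of_fibers_symm [SFinite μ] [SFinite ν] (hS : MeasurableSet S)
    {K : Set β} (hSK : ∀ z ∈ S, z.2 ∈ K) (hC : ∀ y, μ ((·, y) ⁻¹' S) ≤ C) :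
    μ.prod ν S ≤ C * ν K := by
  rw [prod_apply_symm hS]
  refine (lintegral_mono fun y => ?_).trans (lintegral_indicator_const_le K C)
  by_cases hy : y ∈ K
  · simpa [hy] using hC y
  · have : (·, y) ⁻¹' S = ∅ := eq_empty_of_forall_notMem fun x hx => hy (hSK _ hx)
    simp [this]

end MeasureTheory.Measure

theorem Real.volume_biUnion_closedBall_diff_le {ι : Type*} {s : Set ι} (hs : s.Finite)
    {c : ι → ℝ} {p a b : ℝ} (hc : ∀ i ∈ s, dist (c i) p ≤ a) (hab : a ≤ b) :
    volume ((⋃ i ∈ s, closedBall (c i) b) \ ⋃ i ∈ s, closedBall (c i) a) ≤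
      ENNReal.ofReal (2 * (b - a)) := by
  rcases s.eq_empty_or_nonempty with rfl | hne
  · simp
  obtain ⟨i, hi, hmax⟩ := s.exists_max_image c hs hne
  obtain ⟨j, hj, hmin⟩ := s.exists_min_image c hs hne
  have hsub : (⋃ i ∈ s, closedBall (c i) b) \ ⋃ i ∈ s, closedBall (c i) a ⊆
      Ico (c j - b) (c j - a) ∪ Ioc (c i + a) (c i + b) := by
    rintro t ⟨ht, hta⟩
    simp only [mem_iUnion, mem_closedBall, Real.dist_eq, exists_prop, not_exists,
      not_and, not_le] at ht hta hc
    obtain ⟨k, hk, htk⟩ := ht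
    have := hmax k hk; have := hmin k hk
    have := abs_le.1 htk; have := abs_le.1 (hc i hi); have := abs_le.1 (hc j hj)
    have hti := lt_abs.1 (hta i hi); have htj := lt_abs.1 (hta j hj)
    simp only [mem_union, mem_Ico, mem_Ioc]
    -- both `closedBall (c j) a` and `closedBall (c i) a` contain `p`, so together they cover
    -- `[c j - a, c i + a]`
    by_cases htp : t ≤ p
    · left; constructor <;> rcases htj with h | h <;> linarith
    · right; constructor <;> rcases hti with h | h <;> linarith
  calc _ ≤ volume (Ico (c j - b) (c j - a) ∪ Ioc (c i + a) (c i + b)) := measure_mono hsub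
    _ ≤ volume (Ico (c j - b) (c j - a)) + volume (Ioc (c i + a) (c i + b)) :=
      measure_union_le _ _
    _ = ENNReal.ofReal (2 * (b - a)) := by
      rw [Real.volume_Ico, Real.volume_Ioc, ← ENNReal.ofReal_add (by linarith) (by linarith)]
      ring_nf

theorem volume_prod_biUnion_closedBall_diff_le {ι Y : Type*} [PseudoMetricSpace Y]
    [MeasurableSpace Y] [OpensMeasurableSpace Y] {μ : Measure Y} [SFinite μ] {s : Set ι}
    (hs : s.Finite) {c₁ : ι → ℝ} {c₂ : ι → Y} {p₁ : ℝ} {p₂ : Y} {r a b : ℝ} {D : ℝ≥0∞}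
    (hc₁ : ∀ i ∈ s, dist (c₁ i) p₁ ≤ r) (hc₂ : ∀ i ∈ s, dist (c₂ i) p₂ ≤ r)
    (hra : r ≤ a) (hab : a ≤ b)
    (hD : ∀ t ⊆ s, μ ((⋃ i ∈ t, closedBall (c₂ i) b) \ ⋃ i ∈ t, closedBall (c₂ i) a) ≤ D) :
    (volume.prod μ) ((⋃ i ∈ s, closedBall (c₁ i) b ×ˢ closedBall (c₂ i) b) \
        ⋃ i ∈ s, closedBall (c₁ i) a ×ˢ closedBall (c₂ i) a) ≤
      ENNReal.ofReal (2 * (b - a)) * μ (closedBall p₂ (r + b)) +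
        ENNReal.ofReal (2 * (r + a)) * D := by
  set U : ℝ → ℝ → Set (ℝ × Y) := fun ρ₁ ρ₂ =>
    ⋃ i ∈ s, closedBall (c₁ i) ρ₁ ×ˢ closedBall (c₂ i) ρ₂
  have hU : ∀ ρ₁ ρ₂, MeasurableSet (U ρ₁ ρ₂) := fun _ _ =>
    hs.measurableSet_biUnion fun _ _ => measurableSet_closedBall.prod measurableSet_closedBall
  -- thickening in the `ℝ` direction: the fibres over `Y` are unions of intervals containing `p₁`
  have hfst : (volume.prod μ) (U b b \ U a b) ≤
      ENNReal.ofReal (2 * (b - a)) * μ (closedBall p₂ (r + b)) := by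
    refine Measure.prod_apply_le_mul_of_fibers_symm ((hU b b).diff (hU a b)) ?_ fun y => ?_
    · rintro ⟨t, y⟩ ⟨hz, -⟩
      obtain ⟨i, hi, -, hy⟩ : ∃ i ∈ s, dist t (c₁ i) ≤ b ∧ dist y (c₂ i) ≤ b := by
        simpa [U, and_left_comm] using hz
      exact (dist_triangle _ _ _).trans (by linarith [hc₂ i hi])
    · have hfiber : (·, y) ⁻¹' (U b b \ U a b) =
          (⋃ i ∈ {i ∈ s | y ∈ closedBall (c₂ i) b}, closedBall (c₁ i) b) \
            ⋃ i ∈ {i ∈ s | y ∈ closedBall (c₂ i) b}, closedBall (c₁ i) a := by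
        ext t
        simp only [U, mem_preimage, Set.mem_sdiff, mem_iUnion, mem_prod, mem_sep_iff, exists_prop,
          and_assoc, and_comm]
      rw [hfiber]
      exact Real.volume_biUnion_closedBall_diff_le (hs.subset (sep_subset _ _))
        (fun i hi => (hc₁ i hi.1).trans hra) hab
  -- thickening in the `Y` direction: the fibres over `ℝ` are annuli of subfamilies
  have hsnd : (volume.prod μ) (U a b \ U a a) ≤ ENNReal.ofReal (2 * (r + a)) * D := by
    rw [← Real.volume_closedBall p₁, mul_comm]
    refine Measure.prod_apply_le_mul_of_fibers ((hU a b).diff (hU a a)) ?_ fun t => ?_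
    · rintro ⟨t, y⟩ ⟨hz, -⟩
      obtain ⟨i, hi, ht, -⟩ : ∃ i ∈ s, dist t (c₁ i) ≤ a ∧ dist y (c₂ i) ≤ b := by
        simpa [U, and_left_comm] using hz
      exact (dist_triangle _ _ _).trans (by linarith [hc₁ i hi])
    · have hfiber : Prod.mk t ⁻¹' (U a b \ U a a) =
          (⋃ i ∈ {i ∈ s | t ∈ closedBall (c₁ i) a}, closedBall (c₂ i) b) \
            ⋃ i ∈ {i ∈ s | t ∈ closedBall (c₁ i) a}, closedBall (c₂ i) a := by
        ext y
        simp only [U, mem_preimage, Set.mem_sdiff, mem_iUnion, mem_prod, mem_sep_iff, exists_prop,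
          and_assoc]
      rw [hfiber]
      exact hD _ (sep_subset _ _)
  calc _ ≤ (volume.prod μ) (U b b \ U a b ∪ U a b \ U a a) := measure_mono (sdiff_triangle _ _ _)
    _ ≤ _ := (measure_union_le _ _).trans (add_le_add hfst hsnd)

theorem MeasurableEquiv.piFinSuccAbove_zero_symm_preimage_closedBall {n : ℕ}
    (x : Fin (n + 1) → ℝ) {ρ : ℝ} (hρ : 0 ≤ ρ) :
    (MeasurableEquiv.piFinSuccAbove (fun _ => ℝ) 0).symm ⁻¹' closedBall x ρ =
      closedBall (x 0) ρ ×ˢ closedBall (Fin.tail x) ρ := by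
  ext ⟨t, y⟩
  simp [MeasurableEquiv.piFinSuccAbove, Fin.consEquiv, mem_closedBall, dist_pi_le_iff hρ,
    Fin.forall_fin_succ, Fin.tail]

theorem Real.volume_pi_biUnion_closedBall_diff_le {ι : Type*} {n : ℕ} {s : Set ι} (hs : s.Finite)
    {c : ι → Fin n → ℝ} {p : Fin n → ℝ} {r a b : ℝ} (hc : ∀ i ∈ s, dist (c i) p ≤ r)
    (hr : 0 ≤ r) (hra : r ≤ a) (hab : a ≤ b) :
    volume ((⋃ i ∈ s, closedBall (c i) b) \ ⋃ i ∈ s, closedBall (c i) a) ≤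
      ENNReal.ofReal (2 ^ n * ((r + b) ^ n - (r + a) ^ n)) := by
  induction n generalizing s with
  | zero =>
    have : (⋃ i ∈ s, closedBall (c i) b) ⊆ ⋃ i ∈ s, closedBall (c i) a :=
      biUnion_mono subset_rfl fun i _ z _ => by
        rw [Subsingleton.elim z (c i)]; exact mem_closedBall_self (hr.trans hra)
    simp [sdiff_eq_empty.2 this]
  | succ n ih =>
    have ha : 0 ≤ a := hr.trans hra
    have hb : 0 ≤ b := ha.trans hab
    have he := (volume_preserving_piFinSuccAbove (fun _ : Fin (n + 1) => ℝ) 0).symm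
    rw [← he.measure_preimage_equiv, preimage_sdiff, preimage_iUnion₂, preimage_iUnion₂]
    simp only [MeasurableEquiv.piFinSuccAbove_zero_symm_preimage_closedBall _ ha,
      MeasurableEquiv.piFinSuccAbove_zero_symm_preimage_closedBall _ hb]
    rw [Measure.volume_eq_prod]
    have hc₂ : ∀ i ∈ s, dist (Fin.tail (c i)) (Fin.tail p) ≤ r := fun i hi =>
      (dist_pi_le_iff hr).2 fun j => (dist_le_pi_dist (c i) p j.succ).trans (hc i hi)
    refine (volume_prod_biUnion_closedBall_diff_le hs
      (fun i hi => (dist_le_pi_dist _ _ 0).trans (hc i hi)) hc₂ hra hab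
      fun t ht => ih (hs.subset ht) fun i hi => hc₂ i (ht hi)).trans_eq ?_
    have hD : 0 ≤ 2 ^ n * ((r + b) ^ n - (r + a) ^ n) :=
      mul_nonneg (by positivity) (sub_nonneg.2 (pow_le_pow_left₀ (by linarith) (by linarith) n))
    rw [Real.volume_pi_closedBall _ (by linarith), Fintype.card_fin,
      ← ENNReal.ofReal_mul (by linarith), ← ENNReal.ofReal_mul (by linarith),
      ← ENNReal.ofReal_add (by positivity) (by positivity), mul_pow]
    congr 1
    ring

theorem smul_unitCube {d : ℕ} {ρ : ℝ} (hρ : 0 < ρ) :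
    ρ • unitCube d = WithLp.ofLp ⁻¹' closedBall 0 ρ := by
  ext z
  rw [mem_smul_set_iff_inv_smul_mem₀ hρ.ne']
  simp [unitCube, mem_closedBall, pi_norm_le_iff_of_nonneg hρ.le, abs_mul, abs_of_pos hρ,
    inv_mul_le_iff₀ hρ]

theorem range_add_smul_unitCube {ι : Type*} {d : ℕ} (x : ι → EuclideanSpace ℝ (Fin d)) {ρ : ℝ}
    (hρ : 0 < ρ) :
    range x + ρ • unitCube d = WithLp.ofLp ⁻¹' ⋃ i, closedBall (WithLp.ofLp (x i)) ρ := by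
  ext z
  simp only [smul_unitCube hρ, Set.mem_add, exists_range_iff, mem_preimage, mem_iUnion,
    mem_closedBall, dist_eq_norm]
  refine exists_congr fun i => ⟨?_, fun h => ⟨z - x i, by simpa using h, add_sub_cancel _ _⟩⟩
  rintro ⟨y, hy, rfl⟩
  simpa using hy

theorem two_pow_mul_pow_sub_pow_le (d : ℕ) {r δ : ℝ} (hr : 0 ≤ r) (hδ : 0 ≤ δ) :
    2 ^ d * ((r + (r + δ)) ^ d - (r + r) ^ d) ≤ 2 ^ (2 * d - 1) * ((r + δ) ^ d - r ^ d) := by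
  -- midpoint convexity of `t ↦ t ^ d` between `2r` and `2(r + δ)`
  have hmid : (r + (r + δ)) ^ d ≤ 2 ^ d * (r ^ d + (r + δ) ^ d) / 2 := by
    have h := (convexOn_pow d).2 (mem_Ici.2 (by positivity : (0:ℝ) ≤ 2 * r))
      (mem_Ici.2 (by positivity : (0:ℝ) ≤ 2 * (r + δ))) (by norm_num : (0:ℝ) ≤ 1 / 2)
      (by norm_num : (0:ℝ) ≤ 1 / 2) (by norm_num)
    have hm : 1 / 2 * (2 * r) + 1 / 2 * (2 * (r + δ)) = r + (r + δ) := by ring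
    simp only [smul_eq_mul, mul_pow] at h
    rw [hm] at h
    linarith
  calc 2 ^ d * ((r + (r + δ)) ^ d - (r + r) ^ d)
      ≤ 2 ^ d * (2 ^ d * (r ^ d + (r + δ) ^ d) / 2 - 2 ^ d * r ^ d) := by
        rw [← two_mul, mul_pow]; gcongr
    _ = 2 ^ d * 2 ^ d / 2 * ((r + δ) ^ d - r ^ d) := by ring
    _ = 2 ^ (2 * d - 1) * ((r + δ) ^ d - r ^ d) := by
      rcases d with _ | m
      · simp
      · rw [show 2 * (m + 1) - 1 = 2 * m + 1 by omega]; ring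

theorem volume_annulus_cube_parallel_set_le_general
    (d : ℕ) (r δ : ℝ) (hr : 0 < r) (hδ : 0 < δ) (N : ℕ)
    (x : Fin (N + 1) → EuclideanSpace ℝ (Fin d))
    (hx : ∀ i j, |x i j - x 0 j| ≤ r) :
    volume ((Set.range x + (r + δ) • unitCube d) \ (Set.range x + r • unitCube d)) ≤
      ENNReal.ofReal (2 ^ (2 * d - 1) * ((r + δ) ^ d - r ^ d)) := by
  rw [range_add_smul_unitCube x (by positivity), range_add_smul_unitCube x hr, ← preimage_sdiff]
  have he := EuclideanSpace.volume_preserving_symm_measurableEquiv_toLp (Fin d)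
  refine (he.measure_preimage_equiv _).trans_le ?_
  have hdist : ∀ i ∈ univ, dist (WithLp.ofLp (x i)) (WithLp.ofLp (x 0)) ≤ r := fun i _ =>
    (dist_pi_le_iff hr.le).2 fun j => (Real.dist_eq _ _).trans_le (hx i j)
  calc _ ≤ ENNReal.ofReal (2 ^ d * ((r + (r + δ)) ^ d - (r + r) ^ d)) := by
        simpa using Real.volume_pi_biUnion_closedBall_diff_le finite_univ hdist hr.le le_rfl
          (by linarith)
    _ ≤ _ := ENNReal.ofReal_le_ofReal (two_pow_mul_pow_sub_pow_le d hr.le hδ.le)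

/-- For `d ≥ 1`, `r, δ > 0`, `N ≥ 1` and points `x_0, …, x_N ∈ ℝ^d` with
`‖x_i − x_0‖_∞ ≤ r`, setting `A = {x_0, …, x_N}` we have
`λ(A_{⊞(r+δ)} \ A_{⊞r}) ≤ 2^{2d−1} ((r+δ)^d − r^d)`. -/
theorem volume_annulus_cube_parallel_set_le
    (d : ℕ) (hd : 1 ≤ d) (r δ : ℝ) (hr : 0 < r) (hδ : 0 < δ) (N : ℕ) (hN : 1 ≤ N)
    (x : Fin (N + 1) → EuclideanSpace ℝ (Fin d))
    (hx : ∀ i j, |x i j - x 0 j| ≤ r) :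
    volume ((Set.range x + (r + δ) • unitCube d) \ (Set.range x + r • unitCube d)) ≤
      ENNReal.ofReal (2 ^ (2 * d - 1) * ((r + δ) ^ d - r ^ d)) :=
  volume_annulus_cube_parallel_set_le_general d r δ hr hδ N x hx
end

section
/- Let d ≥ 1, r > 0, δ > 0, and let A = {x_1, …, x_N} be a nonempty finite set of points in ℝ^d. Then λ(A_{⊞(r+δ)} \ A_{⊞r}) ≤ N_C(A; r) · 2^{2d−1} ((r+δ)^d − r^d), where N_C(A; r) is the r-packing number of A with respect to the ℓ∞ metric. -/
/-!
Take a maximal `r`-packing `S` of `A`: it is an `r`-net, so each point of the annulus lies in the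
closed orthant `u` at some `s ∈ S`, within `r + δ` but not within `r` of the cluster
`B = A ∩ closedBall s r`. That piece lies in the cube `K'` of side `2r + δ` with corner `s` in the
orthant `u`, and translating by `δ • u` maps the part of the cube `K` of side `2r` outside the
`r`-neighbourhood of `B` into `K'`, disjointly from the `(r + δ)`-neighbourhood of `B`. Hence each
of the `|S| · 2^d` pieces has volume at most `(2r + δ)^d - (2r)^d`, and
`(2r + δ)^d ≤ 2^(d-1) ((r + δ)^d + r^d)` turns this into the stated bound.
-/

open MeasureTheory Set Filter
open scoped ENNReal Pointwise

/-- The `ℓ∞` distance on `ℝ^d` (the sup norm of the coordinatewise difference). -/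
noncomputable def distInf {d : ℕ} (x y : EuclideanSpace ℝ (Fin d)) : ℝ :=
  ‖(fun i => x i - y i : Fin d → ℝ)‖

/-- The `ε`-packing number of `A` with respect to the metric `dist'`: the maximal
cardinality of a subset of `A` whose points have pairwise distances `> ε`. -/
noncomputable def packingNum {d : ℕ}
    (dist' : EuclideanSpace ℝ (Fin d) → EuclideanSpace ℝ (Fin d) → ℝ)
    (A : Set (EuclideanSpace ℝ (Fin d))) (ε : ℝ) : ℕ :=
  sSup {n : ℕ | ∃ S : Finset (EuclideanSpace ℝ (Fin d)), ↑S ⊆ A ∧ S.card = n ∧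
    ∀ x ∈ S, ∀ y ∈ S, x ≠ y → ε < dist' x y}

open Metric

theorem measure_diff_add_measure_le_of_vadd_subset {G : Type*} [MeasurableSpace G] [AddGroup G]
    [MeasurableAdd G] (μ : Measure G) [μ.IsAddLeftInvariant] (v : G) {U W K K' : Set G}
    (hU : MeasurableSet U) (hW : MeasurableSet W) (hUW : U ⊆ W) (hWK' : W ⊆ K')
    (hvadd : v +ᵥ (K \ U) ⊆ K' \ W) :
    μ (W \ U) + μ K ≤ μ K' := by
  have hWU : μ (W \ U) + μ U = μ W := by
    rw [← measure_sdiff_add_inter W hU, inter_eq_right.mpr hUW]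
  calc μ (W \ U) + μ K = μ (W \ U) + μ (K ∩ U) + μ (K \ U) := by
        rw [add_assoc, measure_inter_add_sdiff K hU]
    _ ≤ μ W + μ (v +ᵥ (K \ U)) := by
        rw [measure_vadd, ← hWU]; gcongr; exact inter_subset_right
    _ = μ (W ∪ (v +ᵥ (K \ U))) :=
        (measure_union' (disjoint_sdiff_right.mono_right hvadd) hW).symm
    _ ≤ μ K' := measure_mono (union_subset hWK' (hvadd.trans sdiff_subset))

theorem mem_add_closedBall_zero_iff {E : Type*} [SeminormedAddCommGroup E] {s : Set E} {ρ : ℝ}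
    {y : E} : y ∈ s + closedBall 0 ρ ↔ ∃ b ∈ s, dist y b ≤ ρ := by
  simp only [Set.mem_add, mem_closedBall_zero_iff, dist_eq_norm]
  constructor
  · rintro ⟨b, hb, z, hz, rfl⟩
    exact ⟨b, hb, by simpa using hz⟩
  · rintro ⟨b, hb, hyb⟩
    exact ⟨b, hb, y - b, hyb, add_sub_cancel b y⟩

theorem abs_mul_of_abs_eq_one {u : ℝ} (hu : |u| = 1) (a : ℝ) : |u * a| = |a| := by
  rw [abs_mul, hu, one_mul]

theorem Real.volume_preimage_mul_sub_Icc {u : ℝ} (hu : |u| = 1) (c L : ℝ) :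
    volume ((fun t => u * (t - c)) ⁻¹' Icc 0 L) = ENNReal.ofReal L := by
  have hu0 : u ≠ 0 := by rintro rfl; simp at hu
  have : (fun t => u * (t - c)) ⁻¹' Icc 0 L = (fun t => t + -c) ⁻¹' ((u * ·) ⁻¹' Icc 0 L) := by
    simp only [sub_eq_add_neg]; rfl
  rw [this, measure_preimage_add_right, Real.volume_preimage_mul_left hu0, abs_inv, hu]
  simp

section OrthantBox

variable {ι : Type*}

/-- For a sign vector `u`, the cube of side `L` with corner `s` in the orthant of `u` at `s`. -/
def orthantBox (s u : ι → ℝ) (L : ℝ) : Set (ι → ℝ) :=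
  univ.pi fun i => (fun t => u i * (t - s i)) ⁻¹' Icc 0 L

theorem mem_orthantBox {s u y : ι → ℝ} {L : ℝ} :
    y ∈ orthantBox s u L ↔ ∀ i, 0 ≤ u i * (y i - s i) ∧ u i * (y i - s i) ≤ L := by
  simp [orthantBox]

theorem measurableSet_orthantBox [Fintype ι] (s u : ι → ℝ) (L : ℝ) :
    MeasurableSet (orthantBox s u L) :=
  MeasurableSet.univ_pi fun _ =>
    measurableSet_Icc.preimage ((measurable_id.sub_const _).const_mul _)

theorem volume_orthantBox [Fintype ι] {s u : ι → ℝ} (hu : ∀ i, |u i| = 1) (L : ℝ) :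
    volume (orthantBox s u L) = ENNReal.ofReal L ^ Fintype.card ι := by
  simp [orthantBox, volume_pi_pi, Real.volume_preimage_mul_sub_Icc (hu _)]

theorem orthantBox_mono (s u : ι → ℝ) {L L' : ℝ} (h : L ≤ L') :
    orthantBox s u L ⊆ orthantBox s u L' :=
  pi_mono fun _ _ => preimage_mono (Icc_subset_Icc_right h)

/-- In the orthant, a coordinate of `y - b` with `b ∈ B` can exceed `r` in absolute value only on
the side of `u`, and there the shift by `δ • u` adds exactly `δ`. -/
theorem vadd_orthantBox_diff_subset [Fintype ι] {s u : ι → ℝ} (hu : ∀ i, |u i| = 1)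
    {B : Set (ι → ℝ)} {r δ : ℝ} (hBs : B ⊆ closedBall s r) (hδ : 0 ≤ δ) :
    (δ • u) +ᵥ (orthantBox s u (2 * r) \ (orthantBox s u (2 * r + δ) ∩ (B + closedBall 0 r))) ⊆
      orthantBox s u (2 * r + δ) \ (orthantBox s u (2 * r + δ) ∩ (B + closedBall 0 (r + δ))) := by
  rintro _ ⟨y, ⟨hyK, hyU⟩, rfl⟩
  have hshift : ∀ i c, u i * ((δ • u +ᵥ y) i - c) = u i * (y i - c) + δ := fun i c => by
    have huu : u i * u i = 1 := by rw [← abs_mul_abs_self, hu i, one_mul]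
    simp only [vadd_eq_add, Pi.add_apply, Pi.smul_apply, smul_eq_mul]
    linear_combination δ * huu
  rw [sdiff_self_inter]
  rw [mem_orthantBox] at hyK
  refine ⟨mem_orthantBox.mpr fun i => ?_, fun hmem => ?_⟩
  · rw [hshift]
    constructor <;> linarith [hyK i]
  obtain ⟨b, hb, hdist⟩ := mem_add_closedBall_zero_iff.mp hmem
  have hr : 0 ≤ r := dist_nonneg.trans (hBs hb)
  refine hyU ⟨orthantBox_mono s u (by linarith) (mem_orthantBox.mpr hyK),
    mem_add_closedBall_zero_iff.mpr ⟨b, hb, (dist_pi_le_iff hr).mpr fun i => ?_⟩⟩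
  have hbs := abs_le.mp ((abs_mul_of_abs_eq_one (hu i) _).trans_le
    ((dist_le_pi_dist b s i).trans (hBs hb)))
  have hyb := abs_le.mp ((abs_mul_of_abs_eq_one (hu i) _).trans_le
    ((dist_le_pi_dist _ b i).trans hdist))
  rw [hshift] at hyb
  rw [Real.dist_eq, ← abs_mul_of_abs_eq_one (hu i), abs_le]
  constructor <;> linarith [hyK i]

theorem volume_orthantBox_inter_add_closedBall_diff_le [Fintype ι] {s u : ι → ℝ}
    (hu : ∀ i, |u i| = 1) {B : Set (ι → ℝ)} (hB : IsCompact B) {r δ : ℝ}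
    (hBs : B ⊆ closedBall s r) (hr : 0 ≤ r) (hδ : 0 ≤ δ) :
    volume ((orthantBox s u (2 * r + δ) ∩ (B + closedBall 0 (r + δ))) \
        (orthantBox s u (2 * r + δ) ∩ (B + closedBall 0 r))) ≤
      ENNReal.ofReal ((2 * r + δ) ^ Fintype.card ι - (2 * r) ^ Fintype.card ι) := by
  have hmeas : ∀ ρ, MeasurableSet (orthantBox s u (2 * r + δ) ∩ (B + closedBall 0 ρ)) := fun ρ =>
    (measurableSet_orthantBox s u _).inter (hB.add (isCompact_closedBall 0 ρ)).measurableSet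
  have key := measure_diff_add_measure_le_of_vadd_subset volume (δ • u) (hmeas r) (hmeas (r + δ))
    (inter_subset_inter_right _ (add_subset_add_left (closedBall_subset_closedBall (by linarith))))
    inter_subset_left (vadd_orthantBox_diff_subset hu hBs hδ)
  rw [volume_orthantBox hu, volume_orthantBox hu] at key
  rw [ENNReal.ofReal_sub _ (by positivity), ENNReal.ofReal_pow (by positivity),
    ENNReal.ofReal_pow (by positivity)]
  exact ENNReal.le_sub_of_add_le_right (ENNReal.pow_ne_top ENNReal.ofReal_ne_top) key

theorem add_closedBall_diff_subset_biUnion_orthantBox [Fintype ι] [DecidableEq ι]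
    {A : Set (ι → ℝ)} {S : Finset (ι → ℝ)} {r δ : ℝ} (hS : ∀ a ∈ A, ∃ s ∈ S, dist a s ≤ r) :
    (A + closedBall 0 (r + δ)) \ (A + closedBall 0 r) ⊆
      ⋃ s ∈ S, ⋃ u ∈ Fintype.piFinset fun _ => ({1, -1} : Finset ℝ),
        (orthantBox s u (2 * r + δ) ∩ ((A ∩ closedBall s r) + closedBall 0 (r + δ))) \
          (orthantBox s u (2 * r + δ) ∩ ((A ∩ closedBall s r) + closedBall 0 r)) := by
  rintro y ⟨hy, hy'⟩
  obtain ⟨a, ha, hya⟩ := mem_add_closedBall_zero_iff.mp hy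
  obtain ⟨s, hs, has⟩ := hS a ha
  set u : ι → ℝ := fun i => if s i ≤ y i then 1 else -1
  have hu : ∀ i, u i * (y i - s i) = |y i - s i| := fun i => by
    by_cases h : s i ≤ y i
    · simp [u, h, abs_of_nonneg (sub_nonneg.mpr h)]
    · simp [u, h, abs_of_neg (sub_neg.mpr (not_le.mp h))]
  simp only [mem_iUnion₂, exists_prop]
  refine ⟨s, hs, u, Fintype.mem_piFinset.mpr fun i => ?_,
    ⟨mem_orthantBox.mpr fun i => ?_, mem_add_closedBall_zero_iff.mpr ⟨a, ⟨ha, has⟩, hya⟩⟩,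
    fun h => hy' (add_subset_add_right inter_subset_left h.2)⟩
  · by_cases h : s i ≤ y i <;> simp [u, h]
  · rw [hu, ← Real.dist_eq]
    refine ⟨dist_nonneg, (dist_le_pi_dist y s i).trans ?_⟩
    linarith [dist_triangle y a s]

theorem volume_add_closedBall_diff_le [Fintype ι] {A : Set (ι → ℝ)} (hA : IsClosed A)
    (S : Finset (ι → ℝ)) {r δ : ℝ} (hS : ∀ a ∈ A, ∃ s ∈ S, dist a s ≤ r) (hr : 0 ≤ r)
    (hδ : 0 ≤ δ) :
    volume ((A + closedBall 0 (r + δ)) \ (A + closedBall 0 r)) ≤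
      S.card * (2 ^ Fintype.card ι *
        ENNReal.ofReal ((2 * r + δ) ^ Fintype.card ι - (2 * r) ^ Fintype.card ι)) := by
  classical
  set signs : Finset (ι → ℝ) := Fintype.piFinset fun _ => {1, -1}
  have hsigns : ∀ u ∈ signs, ∀ i, |u i| = 1 := fun u hu i => by
    rcases Finset.mem_insert.mp (Fintype.mem_piFinset.mp hu i) with h | h <;> simp_all
  have hcard : signs.card = 2 ^ Fintype.card ι := by
    simp [signs, Finset.card_pair (show (1 : ℝ) ≠ -1 by norm_num)]
  calc _ ≤ _ := measure_mono (add_closedBall_diff_subset_biUnion_orthantBox (δ := δ) hS)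
    _ ≤ ∑ s ∈ S, ∑ u ∈ signs,
          volume ((orthantBox s u (2 * r + δ) ∩ ((A ∩ closedBall s r) + closedBall 0 (r + δ))) \
            (orthantBox s u (2 * r + δ) ∩ ((A ∩ closedBall s r) + closedBall 0 r))) :=
        (measure_biUnion_finset_le _ _).trans
          (Finset.sum_le_sum fun _ _ => measure_biUnion_finset_le _ _)
    _ ≤ ∑ s ∈ S, ∑ u ∈ signs,
          ENNReal.ofReal ((2 * r + δ) ^ Fintype.card ι - (2 * r) ^ Fintype.card ι) :=
        Finset.sum_le_sum fun s _ => Finset.sum_le_sum fun u hu =>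
          volume_orthantBox_inter_add_closedBall_diff_le (hsigns u hu)
            ((isCompact_closedBall s r).inter_left hA) inter_subset_right hr hδ
    _ = _ := by simp [hcard]

end OrthantBox

theorem two_pow_mul_sub_pow_le {a b : ℝ} (ha : 0 ≤ a) (hb : 0 ≤ b) {d : ℕ} (hd : 1 ≤ d) :
    2 ^ d * ((2 * a + b) ^ d - (2 * a) ^ d) ≤ 2 ^ (2 * d - 1) * ((a + b) ^ d - a ^ d) := by
  obtain ⟨n, rfl⟩ : ∃ n, d = n + 1 := ⟨d - 1, by omega⟩
  have hsum : (2 * a + b) ^ (n + 1) ≤ 2 ^ n * ((a + b) ^ (n + 1) + a ^ (n + 1)) := by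
    simpa [add_comm, add_left_comm, two_mul] using add_pow_le (add_nonneg ha hb) ha (n + 1)
  have h2 : (2 : ℝ) ^ (2 * (n + 1) - 1) = 2 ^ (n + 1) * 2 ^ n := by
    rw [← pow_add]; congr 1; omega
  rw [h2, mul_pow, pow_succ 2 n]
  nlinarith [mul_le_mul_of_nonneg_left hsum (by positivity : (0 : ℝ) ≤ 2 ^ n * 2)]

theorem exists_finset_card_eq_packingNum_of_finite {d : ℕ}
    {dist' : EuclideanSpace ℝ (Fin d) → EuclideanSpace ℝ (Fin d) → ℝ}
    (hsymm : ∀ a b, dist' a b = dist' b a) {A : Set (EuclideanSpace ℝ (Fin d))} (hA : A.Finite)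
    {ε : ℝ} (hε : ∀ a, dist' a a ≤ ε) :
    ∃ S : Finset (EuclideanSpace ℝ (Fin d)),
      S.card = packingNum dist' A ε ∧ ∀ a ∈ A, ∃ s ∈ S, dist' a s ≤ ε := by
  classical
  set P := {n : ℕ | ∃ S : Finset (EuclideanSpace ℝ (Fin d)), ↑S ⊆ A ∧ S.card = n ∧
    ∀ x ∈ S, ∀ y ∈ S, x ≠ y → ε < dist' x y}
  have hbdd : BddAbove P := ⟨hA.toFinset.card, by
    rintro n ⟨S, hSA, rfl, -⟩
    exact Finset.card_le_card fun a ha => hA.mem_toFinset.mpr (hSA ha)⟩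
  obtain ⟨S, hSA, hcard, hpack⟩ : packingNum dist' A ε ∈ P :=
    Nat.sSup_mem ⟨0, ∅, by simp⟩ hbdd
  refine ⟨S, hcard, fun a ha => ?_⟩
  by_contra! hfar
  have haS : a ∉ S := fun h => (hfar a h).not_ge (hε a)
  have hinsert : (insert a S).card ∈ P := by
    refine ⟨insert a S, by simpa using insert_subset ha hSA, rfl, ?_⟩
    simp only [Finset.mem_insert]
    rintro x (rfl | hx) y (rfl | hy) hxy
    · exact absurd rfl hxy
    · exact hfar y hy
    · exact hsymm x y ▸ hfar x hx
    · exact hpack x hx y hy hxy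
  have hsup : sSup P = S.card := hcard.symm
  have := le_csSup hbdd hinsert
  rw [Finset.card_insert_of_notMem haS, hsup] at this
  omega

theorem distInf_eq_dist {d : ℕ} (a b : EuclideanSpace ℝ (Fin d)) :
    distInf a b = dist (WithLp.ofLp a) (WithLp.ofLp b) := by
  rw [dist_eq_norm]; rfl

theorem mem_smul_unitCube_iff {d : ℕ} {ρ : ℝ} (hρ : 0 < ρ) {z : EuclideanSpace ℝ (Fin d)} :
    z ∈ ρ • unitCube d ↔ ‖WithLp.ofLp z‖ ≤ ρ := by
  rw [mem_smul_set_iff_inv_smul_mem₀ hρ.ne', pi_norm_le_iff_of_nonneg hρ.le]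
  simp [unitCube, abs_mul, abs_of_pos hρ, inv_mul_le_iff₀ hρ]

theorem add_smul_unitCube_eq_preimage {d : ℕ} (A : Set (EuclideanSpace ℝ (Fin d))) {ρ : ℝ}
    (hρ : 0 < ρ) :
    A + ρ • unitCube d = WithLp.ofLp ⁻¹' (WithLp.ofLp '' A + closedBall 0 ρ) := by
  ext y
  rw [mem_preimage, mem_add_closedBall_zero_iff, exists_mem_image, Set.mem_add]
  constructor
  · rintro ⟨a, ha, z, hz, rfl⟩
    exact ⟨a, ha, by simpa [dist_eq_norm] using (mem_smul_unitCube_iff hρ).mp hz⟩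
  · rintro ⟨a, ha, hya⟩
    refine ⟨a, ha, y - a, (mem_smul_unitCube_iff hρ).mpr ?_, add_sub_cancel a y⟩
    simpa [dist_eq_norm] using hya

theorem volume_annulus_le_packing_cube_general
    (d : ℕ) (hd : 1 ≤ d) (r δ : ℝ) (hr : 0 < r) (hδ : 0 < δ) (N : ℕ)
    (x : Fin N → EuclideanSpace ℝ (Fin d)) :
    volume ((Set.range x + (r + δ) • unitCube d) \ (Set.range x + r • unitCube d)) ≤
      ENNReal.ofReal ((packingNum distInf (Set.range x) r : ℝ) *
        (2 ^ (2 * d - 1) * ((r + δ) ^ d - r ^ d))) := by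
  obtain ⟨S, hScard, hS⟩ := exists_finset_card_eq_packingNum_of_finite (dist' := distInf) (ε := r)
    (fun a b => by rw [distInf_eq_dist, distInf_eq_dist, dist_comm]) (finite_range x)
    (fun a => by rw [distInf_eq_dist, dist_self]; exact hr.le)
  have hnet : ∀ a ∈ WithLp.ofLp '' range x, ∃ s ∈ S.image WithLp.ofLp, dist a s ≤ r := by
    rintro _ ⟨a, ha, rfl⟩
    obtain ⟨s, hs, has⟩ := hS a ha
    exact ⟨_, Finset.mem_image_of_mem _ hs, distInf_eq_dist a s ▸ has⟩
  rw [add_smul_unitCube_eq_preimage _ hr, add_smul_unitCube_eq_preimage _ (add_pos hr hδ),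
    ← preimage_sdiff]
  calc _ = volume ((WithLp.ofLp '' range x + closedBall 0 (r + δ)) \
        (WithLp.ofLp '' range x + closedBall 0 r)) :=
        (EuclideanSpace.volume_preserving_symm_measurableEquiv_toLp _).measure_preimage_equiv _
    _ ≤ (S.image WithLp.ofLp).card * (2 ^ Fintype.card (Fin d) *
          ENNReal.ofReal ((2 * r + δ) ^ Fintype.card (Fin d) - (2 * r) ^ Fintype.card (Fin d))) :=
        volume_add_closedBall_diff_le ((finite_range x).image _).isClosed _ hnet hr.le hδ.le
    _ ≤ ENNReal.ofReal (S.card * (2 ^ d * ((2 * r + δ) ^ d - (2 * r) ^ d))) := by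
        rw [ENNReal.ofReal_mul (by positivity), ENNReal.ofReal_mul (by positivity),
          ENNReal.ofReal_natCast, ENNReal.ofReal_pow zero_le_two, ENNReal.ofReal_ofNat,
          Fintype.card_fin]
        gcongr
        exact Finset.card_image_le
    _ ≤ _ := by
        rw [hScard]
        exact ENNReal.ofReal_le_ofReal (mul_le_mul_of_nonneg_left
          (two_pow_mul_sub_pow_le hr.le hδ.le hd) (Nat.cast_nonneg _))

/-- For `d ≥ 1`, `r, δ > 0` and a nonempty finite set
`A = {x_1, …, x_N} ⊆ ℝ^d`,
`λ(A_{⊞(r+δ)} \ A_{⊞r}) ≤ N_C(A; r) · 2^{2d−1} ((r+δ)^d − r^d)`,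
where `N_C(A; r)` is the `r`-packing number of `A` in the `ℓ∞` metric. -/
theorem volume_annulus_le_packing_cube
    (d : ℕ) (hd : 1 ≤ d) (r δ : ℝ) (hr : 0 < r) (hδ : 0 < δ) (N : ℕ) (hN : 1 ≤ N)
    (x : Fin N → EuclideanSpace ℝ (Fin d)) :
    volume ((Set.range x + (r + δ) • unitCube d) \ (Set.range x + r • unitCube d)) ≤
      ENNReal.ofReal ((packingNum distInf (Set.range x) r : ℝ) *
        (2 ^ (2 * d - 1) * ((r + δ) ^ d - r ^ d))) :=
  volume_annulus_le_packing_cube_general d hd r δ hr hδ N x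
end

section
/- Let d ≥ 2, r > 0, δ > 0, V > 0, and let A ⊆ ℝ^d be a nonempty closed set such that λ(A_{⊕r}) ≤ V. Then λ(A_{⊕(r+δ)} \ A_{⊕r}) ≤ (V/r^d) · 2^{2d−1} ((r+δ)^d − r^d), and the upper surface area of A_{⊕r} satisfies λ̄(∂A_{⊕r}) ≤ (V/r) · 2^{2d−1} d. -/
/-! Pick a nearest point `n x ∈ A` for every `x`. Nearest-point maps onto closed sets are
monotone, `0 ≤ ⟪x - y, n x - n y⟫`, so for `θ = r / R` the map `x ↦ n x + θ • (x - n x)`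
expands distances by at least `θ`, and it sends `A_{⊕R}` into `A_{⊕r}`. Comparing Hausdorff
measures gives the Kneser-type bound `λ(A_{⊕R}) ≤ (R / r)^d λ(A_{⊕r})`; the shell estimate is a
rewriting of it, and the surface bound follows from `(1 + s)^d - 1 ≤ d 2^(d-1) s` for
`0 ≤ s ≤ 1`. -/

open MeasureTheory Set Filter
open scoped ENNReal Pointwise

open Metric Module
open scoped NNReal RealInnerProductSpace

theorem AntilipschitzWith.addHaar_le_mul_of_mapsTo {E : Type*} [NormedAddCommGroup E]
    [NormedSpace ℝ E] [FiniteDimensional ℝ E] [MeasurableSpace E] [BorelSpace E]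
    (μ : Measure E) [μ.IsAddHaarMeasure] {f : E → E} {K : ℝ≥0} (hf : AntilipschitzWith K f)
    {s t : Set E} (hst : MapsTo f s t) :
    μ s ≤ (K : ℝ≥0∞) ^ finrank ℝ E * μ t := by
  have hμH : (μH[finrank ℝ E] : Measure E) = Measure.addHaarScalarFactor μH[finrank ℝ E] μ • μ :=
    Measure.isAddLeftInvariant_eq_smul _ μ
  have hc : (Measure.addHaarScalarFactor μH[finrank ℝ E] μ : ℝ≥0∞) ≠ 0 := by
    exact_mod_cast (Measure.addHaarScalarFactor_pos_of_isAddHaarMeasure _ μ).ne'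
  have key : μH[finrank ℝ E] s ≤ (K : ℝ≥0∞) ^ (finrank ℝ E : ℝ) * μH[finrank ℝ E] t :=
    (hf.le_hausdorffMeasure_image (Nat.cast_nonneg _) s).trans
      (mul_le_mul_right (measure_mono hst.image_subset) _)
  rw [hμH, ENNReal.rpow_natCast] at key
  simp only [Measure.smul_apply, smul_eq_mul, ENNReal.smul_def] at key
  rw [mul_left_comm] at key
  exact (ENNReal.mul_le_mul_iff_right hc ENNReal.coe_ne_top).mp key

theorem inner_sub_sub_nonneg_of_dist_eq_infDist {E : Type*} [NormedAddCommGroup E]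
    [InnerProductSpace ℝ E] {A : Set E} {x y a b : E} (ha : a ∈ A) (hb : b ∈ A)
    (hxa : dist x a = infDist x A) (hyb : dist y b = infDist y A) :
    0 ≤ ⟪x - y, a - b⟫ := by
  have hx : ‖x - a‖ ^ 2 ≤ ‖(x - a) + (a - b)‖ ^ 2 := by
    rw [sub_add_sub_cancel, ← dist_eq_norm, ← dist_eq_norm, hxa]
    exact pow_le_pow_left₀ infDist_nonneg (infDist_le_dist_of_mem hb) 2
  have hy : ‖y - b‖ ^ 2 ≤ ‖(y - b) - (a - b)‖ ^ 2 := by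
    rw [sub_sub_sub_cancel_right, ← dist_eq_norm, ← dist_eq_norm, hyb]
    exact pow_le_pow_left₀ infDist_nonneg (infDist_le_dist_of_mem ha) 2
  rw [norm_add_sq_real] at hx
  rw [norm_sub_sq_real (y - b)] at hy
  have hxy : x - y = (x - a) - (y - b) + (a - b) := by abel
  rw [hxy, inner_add_left, inner_sub_left, real_inner_self_eq_norm_sq]
  linarith

theorem mul_norm_le_norm_smul_add_smul {E : Type*} [NormedAddCommGroup E]
    [InnerProductSpace ℝ E] {u v : E} (huv : 0 ≤ ⟪u, v⟫) {θ : ℝ} (hθ0 : 0 ≤ θ) (hθ1 : θ ≤ 1) :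
    θ * ‖u‖ ≤ ‖θ • u + (1 - θ) • v‖ := by
  refine (pow_le_pow_iff_left₀ (by positivity) (norm_nonneg _) two_ne_zero).mp ?_
  rw [norm_add_sq_real, norm_smul, norm_smul, real_inner_smul_left, real_inner_smul_right,
    Real.norm_of_nonneg hθ0, Real.norm_of_nonneg (sub_nonneg.mpr hθ1)]
  have : 0 ≤ θ * ((1 - θ) * ⟪u, v⟫) := by
    have := sub_nonneg.mpr hθ1
    positivity
  nlinarith [sq_nonneg ((1 - θ) * ‖v‖)]

theorem one_add_pow_sub_one_le {s : ℝ} (hs0 : 0 ≤ s) (hs1 : s ≤ 1) (n : ℕ) :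
    (1 + s) ^ n - 1 ≤ n * 2 ^ (n - 1) * s := by
  have hgeom : (∑ i ∈ Finset.range n, (1 + s) ^ i) * s = (1 + s) ^ n - 1 := by
    simpa using geom_sum₂_mul (1 + s) 1 n
  rw [← hgeom]
  gcongr
  calc ∑ i ∈ Finset.range n, (1 + s) ^ i ≤ ∑ _i ∈ Finset.range n, (2 : ℝ) ^ (n - 1) := by
        refine Finset.sum_le_sum fun i hi => ?_
        calc (1 + s) ^ i ≤ 2 ^ i := by gcongr; linarith
          _ ≤ 2 ^ (n - 1) := pow_le_pow_right₀ one_le_two (by simp at hi; omega)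
    _ = n * 2 ^ (n - 1) := by simp

theorem IsClosed.add_closedBall_zero {E : Type*} [SeminormedAddCommGroup E] [ProperSpace E]
    {A : Set E} (hA : IsClosed A) {s : ℝ} (hs : 0 ≤ s) :
    A + closedBall 0 s = cthickening s A := by
  rw [hA.cthickening_eq_biUnion_closedBall hs]
  ext x
  simp only [Set.mem_add, mem_iUnion, mem_closedBall, dist_eq_norm, sub_zero, exists_prop]
  constructor
  · rintro ⟨a, ha, b, hb, rfl⟩
    exact ⟨a, ha, by rwa [add_sub_cancel_left]⟩
  · rintro ⟨a, ha, hxa⟩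
    exact ⟨a, ha, x - a, hxa, add_sub_cancel _ _⟩

theorem IsClosed.add_smul_unitBall {d : ℕ} {A : Set (EuclideanSpace ℝ (Fin d))} (hA : IsClosed A)
    {s : ℝ} (hs : 0 ≤ s) : A + s • unitBall d = cthickening s A := by
  rw [unitBall, smul_unitClosedBall, Real.norm_of_nonneg hs, hA.add_closedBall_zero hs]

section Kneser

variable {E : Type*} [NormedAddCommGroup E] [InnerProductSpace ℝ E] [FiniteDimensional ℝ E]
  [MeasurableSpace E] [BorelSpace E] (μ : Measure E) [μ.IsAddHaarMeasure]

theorem addHaar_cthickening_le_mul (A : Set E) {r R : ℝ} (hr : 0 < r) (hrR : r ≤ R) :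
    μ (cthickening R A) ≤ ENNReal.ofReal ((R / r) ^ finrank ℝ E) * μ (cthickening r A) := by
  rw [← cthickening_closure, ← cthickening_closure (δ := r)]
  rcases (closure A).eq_empty_or_nonempty with hA | hA
  · simp [hA]
  choose n hnA hn using fun x => isClosed_closure.exists_infDist_eq_dist hA x
  have hR : 0 < R := hr.trans_le hrR
  set θ := r / R with hθ
  have hθ0 : 0 ≤ θ := by positivity
  have hθ1 : θ ≤ 1 := div_le_one_of_le₀ hrR hR.le
  let Φ : E → E := fun x => n x + θ • (x - n x)
  have hΦ : AntilipschitzWith (R / r).toNNReal Φ := by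
    refine AntilipschitzWith.of_le_mul_dist fun x y => ?_
    have hdiff : Φ x - Φ y = θ • (x - y) + (1 - θ) • (n x - n y) := by simp only [Φ]; module
    have hexp := mul_norm_le_norm_smul_add_smul
      (inner_sub_sub_nonneg_of_dist_eq_infDist (hnA x) (hnA y) (hn x).symm (hn y).symm) hθ0 hθ1
    rw [dist_eq_norm, dist_eq_norm, hdiff, Real.coe_toNNReal _ (by positivity)]
    calc ‖x - y‖ = R / r * (θ * ‖x - y‖) := by rw [hθ]; field_simp
      _ ≤ _ := by gcongr
  have hmaps : MapsTo Φ (cthickening R (closure A)) (cthickening r (closure A)) := by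
    intro x hx
    rw [isClosed_closure.cthickening_eq_biUnion_closedBall hR.le] at hx
    obtain ⟨a, ha, hxa⟩ := mem_iUnion₂.mp hx
    refine mem_cthickening_of_dist_le _ (n x) _ _ (hnA x) ?_
    calc dist (Φ x) (n x) = θ * dist x (n x) := by
          simp only [Φ, dist_eq_norm, add_sub_cancel_left, norm_smul, Real.norm_of_nonneg hθ0]
      _ ≤ θ * R := by
          rw [← hn x]
          gcongr
          exact (infDist_le_dist_of_mem ha).trans (mem_closedBall.mp hxa)
      _ = r := by rw [hθ]; field_simp
  rw [ENNReal.ofReal_pow (div_pos hR hr).le]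
  exact hΦ.addHaar_le_mul_of_mapsTo μ hmaps

theorem addHaar_cthickening_sdiff_le (A : Set E) {r R V : ℝ} (hr : 0 < r) (hrR : r ≤ R)
    (hV : μ (cthickening r A) ≤ ENNReal.ofReal V) :
    μ (cthickening R A \ cthickening r A) ≤ ENNReal.ofReal (((R / r) ^ finrank ℝ E - 1) * V) := by
  have hone : 1 ≤ (R / r) ^ finrank ℝ E := one_le_pow₀ ((one_le_div hr).mpr hrR)
  rw [measure_sdiff (cthickening_mono hrR A) isClosed_cthickening.nullMeasurableSet
    (hV.trans_lt ENNReal.ofReal_lt_top).ne, tsub_le_iff_right, ENNReal.ofReal_mul (by linarith)]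
  calc μ (cthickening R A) ≤ ENNReal.ofReal ((R / r) ^ finrank ℝ E) * μ (cthickening r A) :=
        addHaar_cthickening_le_mul μ A hr hrR
    _ = ENNReal.ofReal ((R / r) ^ finrank ℝ E - 1) * μ (cthickening r A) + μ (cthickening r A) := by
        rw [← add_one_mul, ← ENNReal.ofReal_one, ← ENNReal.ofReal_add (by linarith) zero_le_one,
          sub_add_cancel]
    _ ≤ _ := by gcongr

end Kneser

theorem upperSurf_unitBall_cthickening_le {d : ℕ} {A : Set (EuclideanSpace ℝ (Fin d))}
    {r V : ℝ} (hr : 0 < r) (hV : 0 ≤ V) (hvol : volume (cthickening r A) ≤ ENNReal.ofReal V) :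
    upperSurf (unitBall d) (cthickening r A) ≤ ENNReal.ofReal (V / r * (d * 2 ^ (d - 1))) := by
  refine limsup_le_of_le isCobounded_le_of_bot ?_
  filter_upwards [Ioc_mem_nhdsGT hr] with t ⟨ht0, htr⟩
  rw [isClosed_cthickening.add_smul_unitBall ht0.le, cthickening_cthickening ht0.le hr.le]
  refine ENNReal.div_le_of_le_mul (le_measure_sdiff.trans
    ((addHaar_cthickening_sdiff_le volume A hr (by linarith) hvol).trans ?_))
  rw [finrank_euclideanSpace_fin, ← ENNReal.ofReal_mul (by positivity)]
  refine ENNReal.ofReal_le_ofReal ?_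
  have hbern := one_add_pow_sub_one_le (div_nonneg ht0.le hr.le) ((div_le_one hr).mpr htr) d
  calc (((t + r) / r) ^ d - 1) * V = ((1 + t / r) ^ d - 1) * V := by
        rw [add_div, div_self hr.ne', add_comm]
    _ ≤ d * 2 ^ (d - 1) * (t / r) * V := by gcongr
    _ = V / r * (d * 2 ^ (d - 1)) * t := by ring

theorem reverse_isoperimetric_ball_general
    (d : ℕ) (r δ V : ℝ) (hr : 0 < r) (hδ : 0 < δ) (hV : 0 < V)
    (A : Set (EuclideanSpace ℝ (Fin d))) (hA : IsClosed A)
    (hvol : volume (A + r • unitBall d) ≤ ENNReal.ofReal V) :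
    volume ((A + (r + δ) • unitBall d) \ (A + r • unitBall d)) ≤
      ENNReal.ofReal (V / r ^ d * (2 ^ (2 * d - 1) * ((r + δ) ^ d - r ^ d))) ∧
    upperSurf (unitBall d) (A + r • unitBall d) ≤
      ENNReal.ofReal (V / r * (2 ^ (2 * d - 1) * d)) := by
  rw [hA.add_smul_unitBall hr.le] at hvol ⊢
  rw [hA.add_smul_unitBall (by positivity)]
  have hshell := addHaar_cthickening_sdiff_le volume A hr (by linarith : r ≤ r + δ) hvol
  rw [finrank_euclideanSpace_fin] at hshell
  refine ⟨hshell.trans (ENNReal.ofReal_le_ofReal ?_),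
    (upperSurf_unitBall_cthickening_le hr hV.le hvol).trans (ENNReal.ofReal_le_ofReal ?_)⟩
  · have hgrow : r ^ d ≤ (r + δ) ^ d := by gcongr; linarith
    calc (((r + δ) / r) ^ d - 1) * V = V / r ^ d * ((r + δ) ^ d - r ^ d) := by
          rw [div_pow]
          field_simp
      _ ≤ _ := by
          gcongr
          exact le_mul_of_one_le_left (by linarith) (one_le_pow₀ one_le_two)
  · rw [mul_comm (2 ^ (2 * d - 1) : ℝ)]
    gcongr
    exacts [one_le_two, by omega]

/-- For `d ≥ 2`, `r, δ, V > 0` and a nonempty closed `A ⊆ ℝ^d` with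
`λ(A_{⊕r}) ≤ V`:
`λ(A_{⊕(r+δ)} \ A_{⊕r}) ≤ (V/r^d) · 2^{2d−1}((r+δ)^d − r^d)` and
`λ̄(∂A_{⊕r}) ≤ (V/r) · 2^{2d−1} d`. -/
theorem reverse_isoperimetric_ball
    (d : ℕ) (hd : 2 ≤ d) (r δ V : ℝ) (hr : 0 < r) (hδ : 0 < δ) (hV : 0 < V)
    (A : Set (EuclideanSpace ℝ (Fin d))) (hA : IsClosed A) (hAne : A.Nonempty)
    (hvol : volume (A + r • unitBall d) ≤ ENNReal.ofReal V) :
    volume ((A + (r + δ) • unitBall d) \ (A + r • unitBall d)) ≤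
      ENNReal.ofReal (V / r ^ d * (2 ^ (2 * d - 1) * ((r + δ) ^ d - r ^ d))) ∧
    upperSurf (unitBall d) (A + r • unitBall d) ≤
      ENNReal.ofReal (V / r * (2 ^ (2 * d - 1) * d)) :=
  reverse_isoperimetric_ball_general d r δ V hr hδ hV A hA hvol
end

section
/- Let d ≥ 1, r > 0, δ > 0, V > 0, and let A ⊆ ℝ^d be a nonempty closed set such that λ(A_{⊞r}) ≤ V. Then λ(A_{⊞(r+δ)} \ A_{⊞r}) ≤ (V/r^d) · 2^{2d−1} ((r+δ)^d − r^d), and the upper C-surface area of A_{⊞r} satisfies λ̄_C(∂A_{⊞r}) ≤ (V/r) · 2^{2d−1} d. -/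
open MeasureTheory Set Filter
open scoped ENNReal Pointwise

/-!
The key estimate is `λ(E ⊕ rC ⊕ δC) ≤ (1 + δ/r)^d λ(E ⊕ rC)` for closed `E`. Write `δC` as the
sum of the `d` coordinate segments `[-δ, δ] eᵢ`: adding one segment to a set of the form
`E' ⊕ rC` multiplies its volume by at most `1 + δ/r`, because by Fubini it suffices to look at
lines parallel to `eᵢ`, where the slice `S` is a closed union of intervals of length `2r`. The
points of `(S + [0, δ]) \ S` lie within `δ` to the right of right endpoints of `S`, and these
endpoints are `2r`-separated, each carrying its own interval of length `2r` inside `S`; hence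
`λ((S + [0, δ]) \ S) ≤ δ/(2r) λ(S)`, and symmetrically on the left.
Both claims follow, the second one from `(1 + u)^d - 1 ≤ d 2^(d-1) u` for `0 ≤ u ≤ 1`.
-/

lemma measure_sdiff_le_ofReal_sub_one_mul {α : Type*} [MeasurableSpace α] {μ : Measure α}
    {s t : Set α} (hst : s ⊆ t) (hs : NullMeasurableSet s μ) (hμs : μ s ≠ ∞) {c : ℝ}
    (h : μ t ≤ ENNReal.ofReal c * μ s) : μ (t \ s) ≤ ENNReal.ofReal (c - 1) * μ s := by
  rw [measure_sdiff hst hs hμs, ENNReal.ofReal_sub _ zero_le_one, ENNReal.ofReal_one,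
    ENNReal.sub_mul fun _ _ => hμs, one_mul]
  exact tsub_le_tsub_right h _

lemma one_add_pow_sub_one_le_s11 {u : ℝ} (h0 : 0 ≤ u) (h1 : u ≤ 1) (d : ℕ) :
    (1 + u) ^ d - 1 ≤ d * 2 ^ (d - 1) * u := by
  have h := abs_pow_sub_pow_le (1 + u) 1 d
  rw [one_pow, abs_of_nonneg (sub_nonneg.2 (one_le_pow₀ (by linarith))), add_sub_cancel_left,
    abs_of_nonneg h0, abs_of_nonneg (by linarith), abs_one, max_eq_left (by linarith)] at h
  calc (1 + u) ^ d - 1 ≤ u * d * (1 + u) ^ (d - 1) := h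
    _ ≤ u * d * 2 ^ (d - 1) := by gcongr; linarith
    _ = d * 2 ^ (d - 1) * u := by ring

def IsUnionOfClosedBalls {X : Type*} [PseudoMetricSpace X] (r : ℝ) (S : Set X) : Prop :=
  ∀ x ∈ S, ∃ c, x ∈ Metric.closedBall c r ∧ Metric.closedBall c r ⊆ S

lemma volume_biUnion_Ioc_le {S T : Set ℝ} {ℓ δ : ℝ} (hℓ : 0 < ℓ) (hδ : 0 ≤ δ)
    (hTS : ∀ τ ∈ T, Icc (τ - ℓ) τ ⊆ S) (hT : T.PairwiseDisjoint fun τ => Icc (τ - ℓ) τ) :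
    volume (⋃ τ ∈ T, Ioc τ (τ + δ)) ≤ ENNReal.ofReal (δ / ℓ) * volume S := by
  have hTc : T.Countable := hT.countable_of_nonempty_interior fun τ _ => by
    simpa [interior_Icc] using hℓ
  calc volume (⋃ τ ∈ T, Ioc τ (τ + δ)) ≤ ∑' τ : T, volume (Ioc (τ : ℝ) (τ + δ)) :=
        measure_biUnion_le volume hTc _
    _ = ∑' τ : T, ENNReal.ofReal (δ / ℓ) * volume (Icc ((τ : ℝ) - ℓ) τ) := by
        refine tsum_congr fun τ => ?_
        rw [Real.volume_Ioc, Real.volume_Icc, ← ENNReal.ofReal_mul (by positivity)]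
        congr 1
        field_simp
        ring
    _ = ENNReal.ofReal (δ / ℓ) * volume (⋃ τ ∈ T, Icc (τ - ℓ) τ) := by
        rw [ENNReal.tsum_mul_left, measure_biUnion hTc hT fun _ _ => measurableSet_Icc]
    _ ≤ ENNReal.ofReal (δ / ℓ) * volume S := by
        gcongr
        exact iUnion₂_subset hTS

lemma IsUnionOfClosedBalls.neg {E : Type*} [SeminormedAddCommGroup E] {r : ℝ} {S : Set E}
    (hS : IsUnionOfClosedBalls r S) : IsUnionOfClosedBalls r (-S) := by
  intro x hx
  obtain ⟨c, hxc, hcS⟩ := hS (-x) hx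
  refine ⟨-c, ?_, fun y hy => hcS ?_⟩
  · rwa [Metric.mem_closedBall, ← dist_neg_neg, neg_neg]
  · rwa [Metric.mem_closedBall, ← dist_neg_neg, neg_neg] at hy

namespace IsUnionOfClosedBalls

variable {S : Set ℝ} {r δ : ℝ}

-- The ball of `S` through `τ` cannot reach `x ∉ S`, so it ends at `τ`.
lemma Icc_sub_two_mul_subset (hS : IsUnionOfClosedBalls r S) {x τ : ℝ}
    (hτ : IsGreatest (S ∩ Iic x) τ) (hx : x ∉ S) : Icc (τ - 2 * r) τ ⊆ S := by
  obtain ⟨⟨hτS, hτx⟩, hmax⟩ := hτ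
  obtain ⟨c, hc, hcS⟩ := hS τ hτS
  rw [Real.closedBall_eq_Icc] at hc hcS
  have hcx : c + r ≤ x := by
    by_contra! h
    exact hx (hcS ⟨by linarith [hc.1, mem_Iic.1 hτx], h.le⟩)
  have hτc : τ = c + r := le_antisymm hc.2 (hmax ⟨hcS ⟨by linarith [hc.1, hc.2], le_rfl⟩, hcx⟩)
  exact fun y hy => hcS ⟨by linarith [hy.1], by linarith [hy.2]⟩

lemma volume_add_Icc_sdiff_le (hS : IsUnionOfClosedBalls r S) (hSc : IsClosed S) (hr : 0 < r)
    (hδ : 0 ≤ δ) : volume ((S + Icc 0 δ) \ S) ≤ ENNReal.ofReal (δ / (2 * r)) * volume S := by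
  set D := (S + Icc 0 δ) \ S
  set f : ℝ → ℝ := fun x => sSup (S ∩ Iic x)
  have hf {x} (hx : x ∈ D) : IsGreatest (S ∩ Iic x) (f x) ∧ x - δ ≤ f x := by
    obtain ⟨s, hs, u, ⟨hu0, huδ⟩, rfl⟩ := Set.mem_add.1 hx.1
    have hbdd : BddAbove (S ∩ Iic (s + u)) := ⟨s + u, fun _ h => h.2⟩
    have hsu : s ∈ S ∩ Iic (s + u) := ⟨hs, le_add_of_nonneg_right hu0⟩
    exact ⟨(hSc.inter isClosed_Iic).isGreatest_csSup ⟨s, hsu⟩ hbdd,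
      by linarith [le_csSup hbdd hsu]⟩
  have hlt {x} (hx : x ∈ D) : f x < x :=
    (hf hx).1.1.2.lt_of_ne fun h => hx.2 (h ▸ (hf hx).1.1.1)
  have hsep {x x'} (hx : x ∈ D) (hx' : x' ∈ D) (h : f x < f x') : f x < f x' - 2 * r := by
    have hxx' : x < f x' := by
      by_contra! h'
      exact h.not_ge ((hf hx).1.2 ⟨(hf hx').1.1.1, h'⟩)
    by_contra! h'
    exact hx.2 (hS.Icc_sub_two_mul_subset (hf hx').1 hx'.2 ⟨by linarith [hlt hx], hxx'.le⟩)
  have hdisj : (f '' D).PairwiseDisjoint fun τ => Icc (τ - 2 * r) τ := by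
    rintro _ ⟨x, hx, rfl⟩ _ ⟨x', hx', rfl⟩ hne
    rcases hne.lt_or_gt with h | h
    · have := hsep hx hx' h
      exact Set.disjoint_left.mpr fun y hy hy' => by linarith [hy.2, hy'.1]
    · have := hsep hx' hx h
      exact Set.disjoint_left.mpr fun y hy hy' => by linarith [hy.1, hy'.2]
  calc volume D ≤ volume (⋃ τ ∈ f '' D, Ioc τ (τ + δ)) :=
        measure_mono fun x hx => mem_biUnion (mem_image_of_mem f hx)
          ⟨hlt hx, by linarith [(hf hx).2]⟩
    _ ≤ ENNReal.ofReal (δ / (2 * r)) * volume S :=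
        volume_biUnion_Ioc_le (by positivity) hδ
          (by rintro _ ⟨x, hx, rfl⟩; exact hS.Icc_sub_two_mul_subset (hf hx).1 hx.2) hdisj

lemma volume_add_Icc_neg_sdiff_le (hS : IsUnionOfClosedBalls r S) (hSc : IsClosed S) (hr : 0 < r)
    (hδ : 0 ≤ δ) : volume ((S + Icc (-δ) 0) \ S) ≤ ENNReal.ofReal (δ / (2 * r)) * volume S := by
  have hneg : -((S + Icc (-δ) 0) \ S) = (-S + Icc 0 δ) \ -S := by
    change -(S + Icc (-δ) 0) \ -S = _
    rw [neg_add, neg_Icc, neg_neg, neg_zero]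
  rw [← Measure.measure_neg, hneg, ← Measure.measure_neg volume S]
  exact hS.neg.volume_add_Icc_sdiff_le hSc.neg hr hδ

lemma volume_add_Icc_le (hS : IsUnionOfClosedBalls r S) (hSc : IsClosed S) (hr : 0 < r)
    (hδ : 0 ≤ δ) : volume (S + Icc (-δ) δ) ≤ ENNReal.ofReal (1 + δ / r) * volume S := by
  have hcover : S + Icc (-δ) δ ⊆ S ∪ ((S + Icc 0 δ) \ S) ∪ ((S + Icc (-δ) 0) \ S) := by
    rw [← Icc_union_Icc_eq_Icc (neg_nonpos.2 hδ) hδ, add_union]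
    intro x hx
    simp only [mem_union, Set.mem_sdiff] at hx ⊢
    tauto
  have hsplit : ENNReal.ofReal (1 + δ / r) =
      1 + ENNReal.ofReal (δ / (2 * r)) + ENNReal.ofReal (δ / (2 * r)) := by
    rw [← ENNReal.ofReal_one, ← ENNReal.ofReal_add zero_le_one (by positivity),
      ← ENNReal.ofReal_add (by positivity) (by positivity)]
    congr 1
    field_simp
    ring
  calc volume (S + Icc (-δ) δ)
      ≤ volume S + volume ((S + Icc 0 δ) \ S) + volume ((S + Icc (-δ) 0) \ S) :=
        (measure_mono hcover).trans
          ((measure_union_le _ _).trans (by gcongr; exact measure_union_le _ _))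
    _ ≤ volume S + ENNReal.ofReal (δ / (2 * r)) * volume S +
          ENNReal.ofReal (δ / (2 * r)) * volume S := by
        gcongr
        exacts [hS.volume_add_Icc_sdiff_le hSc hr hδ, hS.volume_add_Icc_neg_sdiff_le hSc hr hδ]
    _ = ENNReal.ofReal (1 + δ / r) * volume S := by rw [hsplit, add_mul, add_mul, one_mul]

end IsUnionOfClosedBalls

section unitCube

variable {k : ℕ} {r δ : ℝ}

lemma unitCube_eq_preimage (k : ℕ) :
    unitCube k = WithLp.ofLp ⁻¹' univ.pi fun _ => Icc (-1 : ℝ) 1 := by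
  ext x
  simp only [unitCube, mem_preimage, mem_univ_pi, mem_Icc, abs_le]
  rfl

lemma isCompact_unitCube (k : ℕ) : IsCompact (unitCube k) := by
  rw [unitCube_eq_preimage]
  exact (PiLp.continuousLinearEquiv 2 ℝ _).toHomeomorph.isCompact_preimage.2
    (isCompact_univ_pi fun _ => isCompact_Icc)

lemma convex_unitCube (k : ℕ) : Convex ℝ (unitCube k) := by
  rw [unitCube_eq_preimage]
  exact (convex_pi fun _ _ => convex_Icc _ _).linear_preimage
    (WithLp.linearEquiv 2 ℝ _).toLinearMap

lemma mem_smul_unitCube (hr : 0 < r) {x : EuclideanSpace ℝ (Fin k)} :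
    x ∈ r • unitCube k ↔ ∀ i, |x i| ≤ r := by
  simp [mem_smul_set_iff_inv_smul_mem₀ hr.ne', unitCube, abs_mul, abs_of_pos hr,
    inv_mul_le_iff₀ hr]

lemma mem_add_smul_unitCube (hr : 0 < r) {E : Set (EuclideanSpace ℝ (Fin k))}
    {x : EuclideanSpace ℝ (Fin k)} : x ∈ E + r • unitCube k ↔ ∃ e ∈ E, ∀ i, |x i - e i| ≤ r := by
  simp only [Set.mem_add, mem_smul_unitCube hr]
  constructor
  · rintro ⟨e, he, w, hw, rfl⟩
    exact ⟨e, he, by simpa using hw⟩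
  · rintro ⟨e, he, hx⟩
    exact ⟨e, he, x - e, by simpa using hx, add_sub_cancel _ _⟩

def coordSegment (i : Fin k) (a : ℝ) : Set (EuclideanSpace ℝ (Fin k)) :=
  EuclideanSpace.single i '' Icc (-a) a

lemma isCompact_coordSegment (i : Fin k) (a : ℝ) : IsCompact (coordSegment i a) :=
  isCompact_Icc.image
    (Isometry.of_dist_eq fun _ _ => PiLp.dist_single_same (p := 2) (i := i) _ _ _).continuous

lemma smul_unitCube_eq_sum_coordSegment (k : ℕ) (hδ : 0 < δ) :
    δ • unitCube k = ∑ i, coordSegment i δ := by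
  ext x
  rw [mem_smul_unitCube hδ, Set.mem_finsetSum]
  constructor
  · intro hx
    refine ⟨fun i => EuclideanSpace.single i (x i), fun {i} _ => ⟨x i, abs_le.1 (hx i), rfl⟩, ?_⟩
    ext j
    simp
  · rintro ⟨g, hg, rfl⟩ j
    choose t ht hgt using fun i => hg (Finset.mem_univ i)
    obtain rfl : g = fun i => EuclideanSpace.single i (t i) := funext fun i => (hgt i).symm
    simpa [PiLp.single_apply] using abs_le.2 (ht j)

end unitCube

section coordSlice

variable {n : ℕ} (i : Fin (n + 1)) {r δ : ℝ}

def coordSlice (B : Set (EuclideanSpace ℝ (Fin (n + 1)))) (y : Fin n → ℝ) : Set ℝ :=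
  {t | WithLp.toLp 2 (i.insertNth t y) ∈ B}

lemma lintegral_volume_coordSlice {B : Set (EuclideanSpace ℝ (Fin (n + 1)))}
    (hB : MeasurableSet B) : ∫⁻ y, volume (coordSlice i B y) = volume B := by
  let e := (MeasurableEquiv.piFinSuccAbove (fun _ => ℝ) i).symm.trans
    (MeasurableEquiv.toLp 2 (Fin (n + 1) → ℝ))
  have he : MeasurePreserving e volume volume :=
    (PiLp.volume_preserving_toLp _).comp (volume_preserving_piFinSuccAbove (fun _ => ℝ) i).symm
  rw [← he.measure_preimage hB.nullMeasurableSet, Measure.volume_eq_prod,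
    Measure.prod_apply_symm (hB.preimage e.measurable)]
  rfl

lemma isClosed_coordSlice {B : Set (EuclideanSpace ℝ (Fin (n + 1)))} (hB : IsClosed B)
    (y : Fin n → ℝ) : IsClosed (coordSlice i B y) :=
  hB.preimage ((PiLp.continuous_toLp 2 _).comp (continuous_id.finInsertNth i continuous_const))

lemma toLp_insertNth_add_single (t s : ℝ) (y : Fin n → ℝ) :
    WithLp.toLp 2 (i.insertNth t y) + EuclideanSpace.single i s =
      WithLp.toLp 2 (i.insertNth (t + s) y) := by
  ext j
  induction j using i.succAboveCases <;> simp [Fin.succAbove_ne]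

lemma coordSlice_add_coordSegment (B : Set (EuclideanSpace ℝ (Fin (n + 1)))) (δ : ℝ)
    (y : Fin n → ℝ) : coordSlice i (B + coordSegment i δ) y = coordSlice i B y + Icc (-δ) δ := by
  ext t
  simp only [coordSlice, coordSegment, Set.mem_add, mem_ofPred_eq]
  constructor
  · rintro ⟨b, hb, _, ⟨s, hs, rfl⟩, hbs⟩
    refine ⟨t - s, ?_, s, hs, sub_add_cancel t s⟩
    have hb' : b = WithLp.toLp 2 (i.insertNth (t - s) y) :=
      add_right_cancel (hbs.trans (by rw [toLp_insertNth_add_single, sub_add_cancel]))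
    rwa [← hb']
  · rintro ⟨u, hu, s, hs, rfl⟩
    exact ⟨_, hu, _, ⟨s, hs, rfl⟩, toLp_insertNth_add_single i u s y⟩

lemma isUnionOfClosedBalls_coordSlice_add_smul_unitCube (hr : 0 < r)
    (E : Set (EuclideanSpace ℝ (Fin (n + 1)))) (y : Fin n → ℝ) :
    IsUnionOfClosedBalls r (coordSlice i (E + r • unitCube (n + 1)) y) := by
  intro t ht
  simp only [coordSlice, mem_ofPred_eq, mem_add_smul_unitCube hr, i.forall_iff_succAbove,
    Fin.insertNth_apply_same, Fin.insertNth_apply_succAbove] at ht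
  obtain ⟨e, he, hi, hy⟩ := ht
  refine ⟨e i, by rwa [Metric.mem_closedBall, Real.dist_eq], fun u hu => ?_⟩
  rw [Metric.mem_closedBall, Real.dist_eq] at hu
  simp only [coordSlice, mem_ofPred_eq, mem_add_smul_unitCube hr, i.forall_iff_succAbove,
    Fin.insertNth_apply_same, Fin.insertNth_apply_succAbove]
  exact ⟨e, he, hu, hy⟩

lemma volume_add_coordSegment_le (hr : 0 < r) (hδ : 0 ≤ δ)
    {B : Set (EuclideanSpace ℝ (Fin (n + 1)))} (hB : IsClosed B)
    (hBi : ∀ y, IsUnionOfClosedBalls r (coordSlice i B y)) :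
    volume (B + coordSegment i δ) ≤ ENNReal.ofReal (1 + δ / r) * volume B := by
  have hBδ : IsClosed (B + coordSegment i δ) :=
    hB.add_right_of_isCompact (isCompact_coordSegment i δ)
  calc volume (B + coordSegment i δ) = ∫⁻ y, volume (coordSlice i B y + Icc (-δ) δ) := by
        simp_rw [← coordSlice_add_coordSegment]
        exact (lintegral_volume_coordSlice i hBδ.measurableSet).symm
    _ ≤ ∫⁻ y, ENNReal.ofReal (1 + δ / r) * volume (coordSlice i B y) :=
        lintegral_mono fun y => (hBi y).volume_add_Icc_le (isClosed_coordSlice i hB y) hr hδ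
    _ = ENNReal.ofReal (1 + δ / r) * volume B := by
        rw [lintegral_const_mul' _ _ ENNReal.ofReal_ne_top,
          lintegral_volume_coordSlice i hB.measurableSet]

end coordSlice

section growth

variable {k : ℕ} {r δ : ℝ} {E : Set (EuclideanSpace ℝ (Fin k))}

lemma volume_add_smul_unitCube_add_coordSegment_le (hr : 0 < r) (hδ : 0 ≤ δ) (hE : IsClosed E)
    (i : Fin k) :
    volume (E + r • unitCube k + coordSegment i δ) ≤
      ENNReal.ofReal (1 + δ / r) * volume (E + r • unitCube k) := by
  obtain ⟨n, rfl⟩ := Nat.exists_eq_add_one_of_ne_zero i.pos.ne'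
  exact volume_add_coordSegment_le i hr hδ
    (hE.add_right_of_isCompact ((isCompact_unitCube _).smul r))
    (isUnionOfClosedBalls_coordSlice_add_smul_unitCube i hr E)

lemma volume_add_smul_unitCube_add_sum_coordSegment_le (hr : 0 < r) (hδ : 0 ≤ δ)
    (s : Finset (Fin k)) (hE : IsClosed E) :
    volume (E + r • unitCube k + ∑ i ∈ s, coordSegment i δ) ≤
      ENNReal.ofReal ((1 + δ / r) ^ s.card) * volume (E + r • unitCube k) := by
  induction s using Finset.induction_on generalizing E with
  | empty => simp
  | insert i s hi ih =>
    have hEi : IsClosed (E + coordSegment i δ) :=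
      hE.add_right_of_isCompact (isCompact_coordSegment i δ)
    set c := ENNReal.ofReal ((1 + δ / r) ^ s.card)
    calc volume (E + r • unitCube k + ∑ j ∈ insert i s, coordSegment j δ)
        = volume (E + coordSegment i δ + r • unitCube k + ∑ j ∈ s, coordSegment j δ) := by
          rw [Finset.sum_insert hi]
          congr 1
          abel
      _ ≤ c * volume (E + r • unitCube k + coordSegment i δ) := by
          rw [add_right_comm E (r • unitCube k) (coordSegment i δ)]
          exact ih hEi
      _ ≤ c * (ENNReal.ofReal (1 + δ / r) * volume (E + r • unitCube k)) := by
          gcongr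
          exact volume_add_smul_unitCube_add_coordSegment_le hr hδ hE i
      _ = ENNReal.ofReal ((1 + δ / r) ^ (insert i s).card) * volume (E + r • unitCube k) := by
          rw [Finset.card_insert_of_notMem hi, pow_succ, ENNReal.ofReal_mul (by positivity),
            mul_assoc]

lemma volume_add_smul_unitCube_add_smul_unitCube_le (hr : 0 < r) (hδ : 0 < δ) (hE : IsClosed E) :
    volume (E + r • unitCube k + δ • unitCube k) ≤
      ENNReal.ofReal ((1 + δ / r) ^ k) * volume (E + r • unitCube k) := by
  simpa [smul_unitCube_eq_sum_coordSegment k hδ] using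
    volume_add_smul_unitCube_add_sum_coordSegment_le hr hδ.le Finset.univ hE

lemma volume_add_smul_unitCube_sdiff_le (hr : 0 < r) (hδ : 0 < δ) (hE : IsClosed E)
    (hfin : volume (E + r • unitCube k) ≠ ∞) :
    volume ((E + r • unitCube k + δ • unitCube k) \ (E + r • unitCube k)) ≤
      ENNReal.ofReal ((1 + δ / r) ^ k - 1) * volume (E + r • unitCube k) := by
  have h0 : (0 : EuclideanSpace ℝ (Fin k)) ∈ δ • unitCube k := by
    simp [mem_smul_unitCube hδ, hδ.le]
  refine measure_sdiff_le_ofReal_sub_one_mul (subset_add_left _ h0) ?_ hfin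
    (volume_add_smul_unitCube_add_smul_unitCube_le hr hδ hE)
  exact (hE.add_right_of_isCompact ((isCompact_unitCube _).smul r)).nullMeasurableSet

lemma upperSurf_add_smul_unitCube_le (hr : 0 < r) (hE : IsClosed E)
    (hfin : volume (E + r • unitCube k) ≠ ∞) :
    upperSurf (unitCube k) (E + r • unitCube k) ≤
      ENNReal.ofReal (k * 2 ^ (k - 1) / r) * volume (E + r • unitCube k) := by
  refine limsup_le_of_le (by isBoundedDefault) ?_
  filter_upwards [Ioc_mem_nhdsGT hr] with ε ⟨hε, hεr⟩
  refine ENNReal.div_le_of_le_mul (le_measure_sdiff.trans ?_)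
  calc _ ≤ ENNReal.ofReal ((1 + ε / r) ^ k - 1) * volume (E + r • unitCube k) :=
        volume_add_smul_unitCube_sdiff_le hr hε hE hfin
    _ ≤ ENNReal.ofReal (k * 2 ^ (k - 1) / r * ε) * volume (E + r • unitCube k) := by
        gcongr
        calc (1 + ε / r) ^ k - 1 ≤ k * 2 ^ (k - 1) * (ε / r) :=
              one_add_pow_sub_one_le_s11 (by positivity) ((div_le_one hr).2 hεr) k
          _ = k * 2 ^ (k - 1) / r * ε := by ring
    _ = ENNReal.ofReal (k * 2 ^ (k - 1) / r) * volume (E + r • unitCube k) *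
          ENNReal.ofReal ε := by
        rw [ENNReal.ofReal_mul (by positivity), mul_right_comm]

end growth

theorem reverse_isoperimetric_cube_general
    (d : ℕ) (r δ V : ℝ) (hr : 0 < r) (hδ : 0 < δ) (hV : 0 < V)
    (A : Set (EuclideanSpace ℝ (Fin d))) (hA : IsClosed A)
    (hvol : volume (A + r • unitCube d) ≤ ENNReal.ofReal V) :
    volume ((A + (r + δ) • unitCube d) \ (A + r • unitCube d)) ≤
      ENNReal.ofReal (V / r ^ d * (2 ^ (2 * d - 1) * ((r + δ) ^ d - r ^ d))) ∧
    upperSurf (unitCube d) (A + r • unitCube d) ≤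
      ENNReal.ofReal (V / r * (2 ^ (2 * d - 1) * d)) := by
  set B := A + r • unitCube d
  have hfin : volume B ≠ ∞ := ne_top_of_le_ne_top ENNReal.ofReal_ne_top hvol
  constructor
  · rw [(convex_unitCube d).add_smul hr.le hδ.le, ← add_assoc]
    have hgrow : 1 ≤ (1 + δ / r) ^ d := one_le_pow₀ (le_add_of_nonneg_right (by positivity))
    calc _ ≤ ENNReal.ofReal ((1 + δ / r) ^ d - 1) * ENNReal.ofReal V :=
          (volume_add_smul_unitCube_sdiff_le hr hδ hA hfin).trans (by gcongr)
      _ ≤ _ := by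
        rw [← ENNReal.ofReal_mul (sub_nonneg.2 hgrow)]
        refine ENNReal.ofReal_le_ofReal ?_
        calc ((1 + δ / r) ^ d - 1) * V = V / r ^ d * (1 * ((r + δ) ^ d - r ^ d)) := by
              rw [one_add_div hr.ne', div_pow]
              field_simp
          _ ≤ V / r ^ d * (2 ^ (2 * d - 1) * ((r + δ) ^ d - r ^ d)) := by
              gcongr
              · exact sub_nonneg.2 (by gcongr; linarith)
              · exact one_le_pow₀ one_le_two
  · calc _ ≤ ENNReal.ofReal (d * 2 ^ (d - 1) / r) * ENNReal.ofReal V :=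
          (upperSurf_add_smul_unitCube_le hr hA hfin).trans (by gcongr)
      _ ≤ _ := by
        rw [← ENNReal.ofReal_mul (by positivity)]
        refine ENNReal.ofReal_le_ofReal ?_
        calc d * 2 ^ (d - 1) / r * V = V / r * (2 ^ (d - 1) * d) := by ring
          _ ≤ V / r * (2 ^ (2 * d - 1) * d) := by
              gcongr
              exacts [one_le_two, by omega]

/-- For `d ≥ 1`, `r, δ, V > 0` and a nonempty closed `A ⊆ ℝ^d` with
`λ(A_{⊞r}) ≤ V`:
`λ(A_{⊞(r+δ)} \ A_{⊞r}) ≤ (V/r^d) · 2^{2d−1}((r+δ)^d − r^d)` and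
`λ̄_C(∂A_{⊞r}) ≤ (V/r) · 2^{2d−1} d`. -/
theorem reverse_isoperimetric_cube
    (d : ℕ) (hd : 1 ≤ d) (r δ V : ℝ) (hr : 0 < r) (hδ : 0 < δ) (hV : 0 < V)
    (A : Set (EuclideanSpace ℝ (Fin d))) (hA : IsClosed A) (hAne : A.Nonempty)
    (hvol : volume (A + r • unitCube d) ≤ ENNReal.ofReal V) :
    volume ((A + (r + δ) • unitCube d) \ (A + r • unitCube d)) ≤
      ENNReal.ofReal (V / r ^ d * (2 ^ (2 * d - 1) * ((r + δ) ^ d - r ^ d))) ∧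
    upperSurf (unitCube d) (A + r • unitCube d) ≤
      ENNReal.ofReal (V / r * (2 ^ (2 * d - 1) * d)) :=
  reverse_isoperimetric_cube_general d r δ V hr hδ hV A hA hvol
end
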